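/- arXiv:1903.02836 — 6 statements merged into one kernel-verified Lean document; each statement's English description precedes it below -/
import Mathlib

section
/- Let n be even, let a = (a_1,...,a_n), r = (r_1,...,r_n) ∈ ℝ^n, and set k = P^{-1} r (P being invertible for even n). Then for every x in the positive orthant (0,∞)^n and every i = 1,...,n, the right-hand side of the Lotka–Volterra system satisfies x_i (Σ_{j>i} a_j x_j − Σ_{j<i} a_j x_j + r_i) = {x_i, H}(x), where H(x) = Σ_{i=1}^n (a_i x_i + k_i log x_i); that is, the Lotka–Volterra system is Hamiltonian with respect to the log-canonical Poisson bracket with Hamiltonian H. -/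
/-- Partial derivative `∂f/∂x_i` of a function on `ℝⁿ`. -/
noncomputable def pd {n : ℕ} (f : (Fin n → ℝ) → ℝ) (x : Fin n → ℝ) (i : Fin n) : ℝ :=
  fderiv ℝ f x (Pi.single i 1)

/-- The log-canonical Poisson bracket
`{f,g}(x) = Σ_{i<j} x_i x_j (∂f/∂x_i ∂g/∂x_j − ∂f/∂x_j ∂g/∂x_i)`. -/
noncomputable def pb {n : ℕ} (f g : (Fin n → ℝ) → ℝ) (x : Fin n → ℝ) : ℝ :=
  ∑ i : Fin n, ∑ j : Fin n,
    if i < j then x i * x j * (pd f x i * pd g x j - pd f x j * pd g x i) else 0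

/-- The antisymmetric matrix with `P i j = 1` for `i < j`, `-1` for `i > j`, `0` on the diagonal. -/
def Pmat (n : ℕ) : Matrix (Fin n) (Fin n) ℝ :=
  fun i j => if i < j then 1 else if j < i then -1 else 0

/-- `J_m(x) = (x_1 x_3 ⋯ x_{2m−1})/(x_2 x_4 ⋯ x_{2m})` (1-based; here indices are 0-based,
so the numerator ranges over even indices `< 2m` and the denominator over odd indices `< 2m`). -/
noncomputable def Jfun {n : ℕ} (m : ℕ) (x : Fin n → ℝ) : ℝ :=
  (∏ i ∈ Finset.univ.filter (fun i : Fin n => i.val < 2*m ∧ Even i.val), x i) /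
  (∏ i ∈ Finset.univ.filter (fun i : Fin n => i.val < 2*m ∧ Odd i.val), x i)

/-- `I_m(x) = (x_{2m+2} x_{2m+4} ⋯ x_n)/(x_{2m+1} x_{2m+3} ⋯ x_{n−1})` (1-based; here 0-based:
numerator over odd indices `≥ 2m`, denominator over even indices `≥ 2m`). -/
noncomputable def Ifun {n : ℕ} (m : ℕ) (x : Fin n → ℝ) : ℝ :=
  (∏ i ∈ Finset.univ.filter (fun i : Fin n => 2*m ≤ i.val ∧ Odd i.val), x i) /
  (∏ i ∈ Finset.univ.filter (fun i : Fin n => 2*m ≤ i.val ∧ Even i.val), x i)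

/-- `v_m(x) = a_1 x_1 + ⋯ + a_m x_m` (sum of the first `m` coordinates, 0-based indices `< m`). -/
def vfun {n : ℕ} (a : Fin n → ℝ) (m : ℕ) (x : Fin n → ℝ) : ℝ :=
  ∑ j ∈ Finset.univ.filter (fun j : Fin n => j.val < m), a j * x j

/-- `F_m = v_{2m} I_m`. -/
noncomputable def Ffun {n : ℕ} (a : Fin n → ℝ) (m : ℕ) (x : Fin n → ℝ) : ℝ :=
  vfun a (2*m) x * Ifun m x

/-- The Hamiltonian `H(x) = Σ_i (a_i x_i + k_i log x_i)`. -/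
noncomputable def Hfun {n : ℕ} (a k : Fin n → ℝ) (x : Fin n → ℝ) : ℝ :=
  ∑ i, (a i * x i + k i * Real.log (x i))

/-!
For the log-canonical bracket, `{x_i, g} = x_i (Σ_{j>i} x_j ∂_j g - Σ_{j<i} x_j ∂_j g)` for every `g`,
and `x_j ∂_j H = a_j x_j + k_j`. Hence `{x_i, H}` is the Lotka–Volterra right-hand side with `r`
replaced by `P k`, and `P k = r` because for even `n` the inverse of `P` is `((-1)^(i+j) P_ij)`:
each entry of the product reduces to alternating sums `Σ (-1)^l` over the intervals cut out by
`i` and `j`, and these cancel because `n` is even.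
-/

open Finset Matrix

def pSign (a b : ℕ) : ℝ := if a < b then 1 else if b < a then -1 else 0

lemma Pmat_apply_eq_pSign {n : ℕ} (i j : Fin n) : Pmat n i j = pSign i j := by
  simp only [Pmat, pSign, Fin.lt_def]

lemma pSign_mul_pSign_comm (u v l : ℕ) : pSign v l * pSign l u = pSign u l * pSign l v := by
  simp only [pSign]
  split_ifs <;> first | omega | ring

lemma sum_neg_one_pow_Ico {m n : ℕ} (h : m ≤ n) :
    ∑ l ∈ Ico m n, (-1 : ℝ) ^ l = ((-1) ^ m - (-1) ^ n) / 2 := by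
  rw [geom_sum_Ico' (by norm_num) h]
  norm_num

lemma sum_pSign_mul_pSign_self {n i : ℕ} (hn : Even n) (hi : i < n) :
    ∑ l ∈ range n, pSign i l * pSign l i * (-1 : ℝ) ^ l = (-1) ^ i := by
  have hterm : ∀ l, pSign i l * pSign l i * (-1 : ℝ) ^ l = (if i = l then (-1) ^ l else 0) - (-1) ^ l := by
    intro l
    simp only [pSign]
    split_ifs <;> first | omega | ring
  simp only [hterm, sum_sub_distrib, sum_ite_eq, mem_range, neg_one_geom_sum, hn, hi, if_true, sub_zero]

lemma sum_pSign_mul_pSign_of_lt {n u v : ℕ} (hn : Even n) (huv : u < v) (hvn : v < n) :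
    ∑ l ∈ range n, pSign u l * pSign l v * (-1 : ℝ) ^ l = 0 := by
  set f : ℕ → ℝ := fun l => pSign u l * pSign l v * (-1 : ℝ) ^ l
  have hsplit : ∑ l ∈ range n, f l = ∑ l ∈ Ico 0 u, f l + f u + ∑ l ∈ Ico (u + 1) v, f l + f v
      + ∑ l ∈ Ico (v + 1) n, f l := by
    rw [← range_eq_Ico, ← sum_range_add_sum_Ico f (by omega : u + 1 ≤ n), sum_range_succ,
      ← sum_Ico_consecutive f (by omega : u + 1 ≤ v) hvn.le, sum_eq_sum_Ico_succ_bot hvn]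
    ring
  have hbelow : ∀ l ∈ Ico 0 u, f l = -(-1) ^ l := fun l hl => by
    simp only [mem_Ico] at hl
    simp only [f, pSign]
    split_ifs <;> first | omega | ring
  have hbetween : ∀ l ∈ Ico (u + 1) v, f l = (-1) ^ l := fun l hl => by
    simp only [mem_Ico] at hl
    simp only [f, pSign]
    split_ifs <;> first | omega | ring
  have habove : ∀ l ∈ Ico (v + 1) n, f l = -(-1) ^ l := fun l hl => by
    simp only [mem_Ico] at hl
    simp only [f, pSign]
    split_ifs <;> first | omega | ring
  rw [hsplit, sum_congr rfl hbelow, sum_congr rfl hbetween, sum_congr rfl habove, sum_neg_distrib,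
    sum_neg_distrib, sum_neg_one_pow_Ico (Nat.zero_le u), sum_neg_one_pow_Ico huv,
    sum_neg_one_pow_Ico hvn, hn.neg_one_pow]
  simp only [f, pSign, lt_irrefl, if_false, pow_succ]
  ring

def PmatInv (n : ℕ) : Matrix (Fin n) (Fin n) ℝ :=
  fun i j => (-1) ^ (i.val + j.val) * Pmat n i j

lemma Pmat_mul_PmatInv {n : ℕ} (hn : Even n) : Pmat n * PmatInv n = 1 := by
  ext i j
  have hentry : (Pmat n * PmatInv n) i j
      = (-1) ^ j.val * ∑ l ∈ range n, pSign i l * pSign l j * (-1 : ℝ) ^ l := by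
    rw [mul_apply, mul_sum,
      ← Fin.sum_univ_eq_sum_range (fun l => (-1) ^ j.val * (pSign i l * pSign l j * (-1 : ℝ) ^ l))]
    refine sum_congr rfl fun l _ => ?_
    simp only [PmatInv, Pmat_apply_eq_pSign]
    ring
  rw [hentry]
  rcases lt_trichotomy i j with hij | rfl | hij
  · rw [sum_pSign_mul_pSign_of_lt hn hij j.isLt, mul_zero, one_apply_ne hij.ne]
  · rw [sum_pSign_mul_pSign_self hn i.isLt, ← mul_pow, one_apply_eq]
    norm_num
  · simp only [pSign_mul_pSign_comm j i]
    rw [sum_pSign_mul_pSign_of_lt hn hij i.isLt, mul_zero, one_apply_ne hij.ne']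

lemma Pmat_mulVec_inv_mulVec {n : ℕ} (hn : Even n) (r : Fin n → ℝ) :
    Pmat n *ᵥ ((Pmat n)⁻¹ *ᵥ r) = r := by
  rw [inv_eq_right_inv (Pmat_mul_PmatInv hn), mulVec_mulVec, Pmat_mul_PmatInv hn,
    one_mulVec]

lemma Pmat_mulVec_apply {n : ℕ} (k : Fin n → ℝ) (i : Fin n) :
    (Pmat n *ᵥ k) i = (∑ j ∈ univ.filter (fun j : Fin n => i < j), k j)
      - ∑ j ∈ univ.filter (fun j : Fin n => j < i), k j := by
  simp only [mulVec, dotProduct, sum_filter, ← sum_sub_distrib]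
  refine sum_congr rfl fun j _ => ?_
  simp only [Pmat]
  split_ifs <;> grind

lemma pd_apply_coord {n : ℕ} (i l : Fin n) (x : Fin n → ℝ) :
    pd (fun y => y i) x l = if i = l then 1 else 0 := by
  simp [pd, (hasFDerivAt_apply (𝕜 := ℝ) i x).fderiv, Pi.single_apply]

lemma pb_coord_left {n : ℕ} (i : Fin n) (g : (Fin n → ℝ) → ℝ) (x : Fin n → ℝ) :
    pb (fun y => y i) g x =
      x i * ((∑ j ∈ univ.filter (fun j : Fin n => i < j), x j * pd g x j)
        - ∑ j ∈ univ.filter (fun j : Fin n => j < i), x j * pd g x j) := by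
  have hterm : ∀ p q : Fin n,
      (if p < q then x p * x q * (pd (fun y => y i) x p * pd g x q
          - pd (fun y => y i) x q * pd g x p) else 0)
      = (if p = i then (if i < q then x i * (x q * pd g x q) else 0) else 0)
        - (if q = i then (if p < i then x i * (x p * pd g x p) else 0) else 0) := by
    intro p q
    simp only [pd_apply_coord]
    split_ifs <;> grind
  simp only [pb, hterm]
  simp only [sum_sub_distrib, sum_ite_eq', sum_ite_irrel,
    mem_univ, if_true, sum_const_zero, sum_filter, mul_sum, mul_ite,
    mul_zero, mul_sub]

lemma pd_Hfun {n : ℕ} (a k x : Fin n → ℝ) (hx : ∀ p, x p ≠ 0) (l : Fin n) :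
    pd (Hfun a k) x l = a l + k l / x l := by
  have hH : HasFDerivAt (Hfun a k)
      (∑ p, (a p • ContinuousLinearMap.proj p + k p • (x p)⁻¹ • ContinuousLinearMap.proj p)) x :=
    HasFDerivAt.fun_sum fun p _ => ((hasFDerivAt_apply p x).const_mul (a p)).fun_add
      (((hasFDerivAt_apply p x).log (hx p)).const_mul (k p))
  simp [pd, hH.fderiv, Pi.single_apply, sum_add_distrib, div_eq_mul_inv]

/-- For even `n`, with `k = P⁻¹ r`, the right-hand side of the Lotka–Volterra system equals
the log-canonical Poisson bracket `{x_i, H}` with `H(x) = Σ_i (a_i x_i + k_i log x_i)`: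
the system is Hamiltonian. -/
theorem stmt_1 (n : ℕ) (hn : Even n) (a r k : Fin n → ℝ) (hk : k = (Pmat n)⁻¹.mulVec r)
    (x : Fin n → ℝ) (hx : ∀ i, 0 < x i) (i : Fin n) :
    x i * ((∑ j ∈ Finset.univ.filter (fun j : Fin n => i < j), a j * x j)
        - (∑ j ∈ Finset.univ.filter (fun j : Fin n => j < i), a j * x j) + r i)
      = pb (fun y => y i) (Hfun a k) x := by
  have hr : r = Pmat n *ᵥ k := by rw [hk, Pmat_mulVec_inv_mulVec hn]
  have hweighted : ∀ j, x j * pd (Hfun a k) x j = a j * x j + k j := fun j => by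
    rw [pd_Hfun a k x (fun p => (hx p).ne') j]
    field_simp [(hx j).ne']
  rw [pb_coord_left, hr, Pmat_mulVec_apply]
  simp only [hweighted, sum_add_distrib]
  ring
end

section
/- Let n be odd and define C(x) = (x_1 x_3 ⋯ x_n)/(x_2 x_4 ⋯ x_{n−1}) on the positive orthant (0,∞)^n. Then C is a Casimir of the log-canonical Poisson bracket: {C, x_j}(x) = 0 for every j = 1,...,n and every x ∈ (0,∞)^n. -/
open Finset

lemma pd_coord {n : ℕ} (j : Fin n) (x : Fin n → ℝ) (i : Fin n) :
    pd (fun y => y j) x i = if i = j then 1 else 0 := by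
  rw [pd, (hasFDerivAt_apply j x).fderiv]
  simp [Pi.single_apply, eq_comm]

lemma pb_coord {n : ℕ} (f : (Fin n → ℝ) → ℝ) (j : Fin n) (x : Fin n → ℝ) :
    pb f (fun y => y j) x =
      x j * (∑ i ∈ Iio j, x i * pd f x i - ∑ k ∈ Ioi j, x k * pd f x k) := by
  have summand : ∀ i k : Fin n,
      (if i < k then x i * x k * (pd f x i * pd (fun y => y j) x k
          - pd f x k * pd (fun y => y j) x i) else 0) =
        (if k = j then if i < k then x j * (x i * pd f x i) else 0 else 0) -
          (if i = j then if i < k then x j * (x k * pd f x k) else 0 else 0) := by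
    intro i k
    simp only [pd_coord]
    split_ifs <;> subst_vars <;> ring
  simp only [pb, summand, sum_sub_distrib, sum_ite_eq', mem_univ, if_true]
  rw [sum_comm (f := fun i k => if i = j then _ else 0)]
  simp only [sum_ite_eq', mem_univ, if_true, ← sum_filter, filter_gt_eq_Iio, filter_lt_eq_Ioi,
    mul_sum, mul_sub]

noncomputable def laurentMonomial {n : ℕ} (a : Fin n → ℤ) (y : Fin n → ℝ) : ℝ :=
  ∏ k, y k ^ a k

lemma mul_pd_laurentMonomial {n : ℕ} (a : Fin n → ℤ) {x : Fin n → ℝ} (hx : ∀ k, x k ≠ 0)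
    (i : Fin n) : x i * pd (laurentMonomial a) x i = a i * laurentMonomial a x := by
  have hasDeriv : HasFDerivAt (laurentMonomial a)
      (∑ k, (∏ l ∈ univ.erase k, x l ^ a l) •
        ((a k * x k ^ (a k - 1)) • (ContinuousLinearMap.proj k : (Fin n → ℝ) →L[ℝ] ℝ))) x :=
    HasFDerivAt.finsetProd fun k _ =>
      (hasDerivAt_zpow (a k) (x k) (Or.inl (hx k))).comp_hasFDerivAt (h₂ := fun t => t ^ a k) x
        (hasFDerivAt_apply (𝕜 := ℝ) k x)
  rw [pd, hasDeriv.fderiv, laurentMonomial, ← mul_prod_erase univ _ (mem_univ i)]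
  simp only [_root_.sum_apply, smul_apply, ContinuousLinearMap.proj_apply, Pi.single_apply,
    smul_eq_mul, mul_ite, mul_one, mul_zero, sum_ite_eq', mem_univ, if_true, zpow_sub_one₀ (hx i)]
  field_simp [hx i]

lemma sum_range_neg_one_pow_eq_sum_Ioo {n j : ℕ} (hn : Odd n) (hj : j < n) :
    ∑ i ∈ range j, (-1 : ℤ) ^ i = ∑ k ∈ Ioo j n, (-1 : ℤ) ^ k := by
  have hsum := sum_range_add_sum_Ico (fun k => (-1 : ℤ) ^ k) hj
  rw [sum_range_succ, neg_one_geom_sum, neg_one_geom_sum, if_neg (Nat.not_even_iff_odd.2 hn),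
    Nat.succ_eq_add_one, Ico_add_one_left_eq_Ioo] at hsum
  rw [neg_one_geom_sum]
  rcases Nat.even_or_odd j with h | h
  · simp only [h, if_true, h.neg_one_pow, zero_add, add_eq_left] at hsum ⊢
    exact hsum.symm
  · simp only [Nat.not_even_iff_odd.2 h, if_false, h.neg_one_pow, add_neg_cancel, zero_add]
      at hsum ⊢
    exact hsum.symm

lemma Fin.sum_Iio_neg_one_pow_eq_sum_Ioi {n : ℕ} (hn : Odd n) (j : Fin n) :
    ∑ i ∈ Iio j, (-1 : ℤ) ^ (i : ℕ) = ∑ k ∈ Ioi j, (-1 : ℤ) ^ (k : ℕ) := by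
  have hIio := sum_map (Iio j) Fin.valEmbedding fun m => (-1 : ℤ) ^ m
  have hIoi := sum_map (Ioi j) Fin.valEmbedding fun m => (-1 : ℤ) ^ m
  rw [Fin.map_valEmbedding_Iio, Nat.Iio_eq_range] at hIio
  rw [Fin.map_valEmbedding_Ioi] at hIoi
  simp only [Fin.valEmbedding_apply] at hIio hIoi
  rw [← hIio, ← hIoi, sum_range_neg_one_pow_eq_sum_Ioo hn j.isLt]

lemma pb_laurentMonomial_coord {n : ℕ} (a : Fin n → ℤ) (j : Fin n) {x : Fin n → ℝ}
    (hx : ∀ k, x k ≠ 0) :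
    pb (laurentMonomial a) (fun y => y j) x =
      x j * laurentMonomial a x * ((∑ i ∈ Iio j, a i - ∑ k ∈ Ioi j, a k : ℤ) : ℝ) := by
  simp only [pb_coord, mul_pd_laurentMonomial a hx, ← sum_mul, Int.cast_sub, Int.cast_sum]
  ring

lemma prod_even_div_prod_odd_eq_laurentMonomial {n : ℕ} (y : Fin n → ℝ) :
    (∏ i ∈ univ.filter (fun i : Fin n => Even i.val), y i) /
        (∏ i ∈ univ.filter (fun i : Fin n => Odd i.val), y i) =
      laurentMonomial (fun i => (-1) ^ (i : ℕ)) y := by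
  rw [laurentMonomial, ← prod_filter_mul_prod_filter_not univ (fun i : Fin n => Even i.val),
    div_eq_mul_inv, ← prod_inv_distrib]
  simp only [Nat.not_even_iff_odd]
  congr 1 <;> refine prod_congr rfl fun i hi => ?_ <;> rw [mem_filter] at hi
  · rw [hi.2.neg_one_pow, zpow_one]
  · rw [hi.2.neg_one_pow, zpow_neg_one]

/-- For odd `n`, `C(x) = (x_1 x_3 ⋯ x_n)/(x_2 x_4 ⋯ x_{n−1})` (0-based: even indices over odd
indices) is a Casimir of the log-canonical bracket: `{C, x_j} = 0` for all `j`. -/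
theorem stmt_2 (n : ℕ) (hn : Odd n)
    (C : (Fin n → ℝ) → ℝ)
    (hC : C = fun y => (∏ i ∈ Finset.univ.filter (fun i : Fin n => Even i.val), y i) /
                       (∏ i ∈ Finset.univ.filter (fun i : Fin n => Odd i.val), y i))
    (j : Fin n) (x : Fin n → ℝ) (hx : ∀ i, 0 < x i) :
    pb C (fun y => y j) x = 0 := by
  have hC_monomial : C = laurentMonomial (fun i => (-1) ^ (i : ℕ)) :=
    hC ▸ funext prod_even_div_prod_odd_eq_laurentMonomial
  rw [hC_monomial, pb_laurentMonomial_coord _ j fun i => (hx i).ne',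
    Fin.sum_Iio_neg_one_pow_eq_sum_Ioi hn, sub_self, Int.cast_zero, mul_zero]
end

section
/- Let n be even, let a = (a_1,...,a_n) ∈ ℝ^n with a ≠ 0, let ℓ denote the smallest integer such that a_{ℓ+1} ≠ 0 (so a_1 = ⋯ = a_ℓ = 0), and let λ = ⌊ℓ/2⌋. Then the n/2 functions J_1, J_2, ..., J_λ, F_{λ+1}, F_{λ+2}, ..., F_{n/2−1}, H_0 are pairwise in involution with respect to the log-canonical Poisson bracket on (0,∞)^n, and they are functionally independent. -/
/-!
Write `U_f = (x_i ∂f/∂x_i)_i` for the logarithmic gradient. The log-canonical bracket is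
`{f, g} = Ω(U_f, U_g)` for the constant form `Ω(u, v) = Σ_{i<j} (u_i v_j - u_j v_i)`. `J_m` and
`I_m` are Laurent monomials with alternating exponent vectors `ε_m` (on the first `2m` indices)
and `η_m` (on the others), so `U_{J_m} = J_m ε_m`, `U_{F_m} = I_m (a_i x_i)_{i<2m} + F_m η_m`, and
`H_0 = F_{n/2}`. Since `Ω(ε_m, w)` is the sum of the first `2m` entries of `w` and `Ω(η_m, w)` minus
the sum of the others, every bracket reduces to an identity between the partial sums `v_t`; the
`J`–`F` brackets vanish because `a` vanishes below `ℓ ≥ 2λ`.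

For independence take `x_ℓ = 1` and the other coordinates small, so that `v_t(x) ≠ 0` for `t > ℓ`.
The sum of the first `2p + 1` entries of `U_{G_q}` vanishes for `q < p` and not for `q = p`
(for `p = λ` the `ℓ`-th entry is used instead), so the log-gradients are triangular.
-/

open Finset

variable {n : ℕ}

def logForm (n : ℕ) : LinearMap.BilinForm ℝ (Fin n → ℝ) :=
  LinearMap.mk₂ ℝ (fun u v => ∑ i, ∑ j, if i < j then u i * v j - u j * v i else 0)
    (fun _ _ _ => by
      simp only [Pi.add_apply, ← sum_add_distrib, ite_add_ite, add_zero]; congr! 3; ring)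
    (fun _ _ _ => by
      simp only [Pi.smul_apply, smul_eq_mul, mul_sum, mul_ite, mul_zero]; congr! 3; ring)
    (fun _ _ _ => by
      simp only [Pi.add_apply, ← sum_add_distrib, ite_add_ite, add_zero]; congr! 3; ring)
    (fun _ _ _ => by
      simp only [Pi.smul_apply, smul_eq_mul, mul_sum, mul_ite, mul_zero]; congr! 3; ring)

lemma logForm_apply (u v : Fin n → ℝ) :
    logForm n u v = ∑ i, ∑ j, if i < j then u i * v j - u j * v i else 0 := rfl

lemma logForm_swap (u v : Fin n → ℝ) : logForm n v u = -logForm n u v := by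
  simp only [logForm_apply, ← sum_neg_distrib]
  refine sum_congr rfl fun i _ => sum_congr rfl fun j _ => ?_
  split_ifs <;> ring

lemma logForm_self (u : Fin n → ℝ) : logForm n u u = 0 := by
  linarith [logForm_swap u u]

def psum (t : ℕ) : (Fin n → ℝ) →ₗ[ℝ] ℝ where
  toFun u := ∑ i with i.val < t, u i
  map_add' u v := sum_add_distrib
  map_smul' c u := by simp [mul_sum]

def trunc (t : ℕ) (u : Fin n → ℝ) : Fin n → ℝ := fun i => if i.val < t then u i else 0

lemma psum_apply (t : ℕ) (u : Fin n → ℝ) : psum t u = ∑ i with i.val < t, u i := rfl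

lemma psum_of_le {t : ℕ} (ht : n ≤ t) (u : Fin n → ℝ) : psum t u = ∑ i, u i := by
  rw [psum_apply, filter_true_of_mem fun i _ => lt_of_lt_of_le i.isLt ht]

lemma sum_trunc (t : ℕ) (u : Fin n → ℝ) : ∑ i, trunc t u i = psum t u := by
  rw [psum_apply, sum_filter]; rfl

lemma psum_trunc (s t : ℕ) (u : Fin n → ℝ) : psum s (trunc t u) = psum (min s t) u := by
  simp only [psum_apply, trunc, ← sum_filter, filter_filter, lt_min_iff]

lemma vfun_eq_psum (a : Fin n → ℝ) (t : ℕ) (x : Fin n → ℝ) : vfun a t x = psum t (a * x) :=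
  rfl

lemma psum_comp_val (p : ℕ → ℝ) {t : ℕ} (ht : t ≤ n) :
    psum t (fun i : Fin n => p i.val) = ∑ k ∈ range t, p k := by
  rw [psum_apply, sum_filter, Fin.sum_univ_eq_sum_range (fun k => if k < t then p k else 0),
    ← sum_filter]
  congr 1
  ext k
  simp only [mem_filter, mem_range]
  omega

lemma logForm_eq_sum_psum (u v : Fin n → ℝ) :
    logForm n u v = ∑ j : Fin n, (psum j.val u + psum (j.val + 1) u - psum n u) * v j := by
  have below : ∀ j : Fin n, (∑ i, if i < j then u i else 0) = psum j.val u := fun j => by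
    rw [psum_apply, sum_filter]; rfl
  have above : ∀ j : Fin n, (∑ i, if j < i then u i else 0) = psum n u - psum (j.val + 1) u :=
    fun j => by
      rw [psum_of_le le_rfl, psum_apply, ← sum_filter, eq_sub_iff_add_eq,
        ← sum_filter_add_sum_filter_not univ (fun i : Fin n => j < i)]
      congr 2
      exact filter_congr fun i _ => by rw [Fin.lt_def]; omega
  have split : ∀ i j : Fin n, (if i < j then u i * v j - u j * v i else 0)
      = (if i < j then u i else 0) * v j - (if i < j then u j else 0) * v i := fun i j => by
    split_ifs <;> ring
  have first : ∑ i, ∑ j, (if i < j then u i else 0) * v j = ∑ j, psum j.val u * v j := by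
    rw [sum_comm]; simp only [← sum_mul, below]
  have second : ∑ i, ∑ j, (if i < j then u j else 0) * v i
      = ∑ i, (psum n u - psum (i.val + 1) u) * v i := by
    simp only [← sum_mul, above]
  rw [logForm_apply]
  simp only [split, sum_sub_distrib]
  rw [first, second, ← sum_sub_distrib]
  exact sum_congr rfl fun j _ => by ring

lemma logForm_of_lt {K : ℕ} {u v : Fin n → ℝ} (hu : ∀ i : Fin n, K ≤ i.val → u i = 0)
    (hv : ∀ j : Fin n, j.val < K → v j = 0) : logForm n u v = (∑ i, u i) * ∑ j, v j := by
  rw [logForm_apply, sum_mul_sum]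
  refine sum_congr rfl fun i _ => sum_congr rfl fun j _ => ?_
  by_cases hi : K ≤ i.val
  · by_cases hij : i < j
    · simp [hij, hu i hi, hu j (hi.trans (le_of_lt hij))]
    · simp [hij, hu i hi]
  · by_cases hij : i < j
    · simp [hij, hv i (by omega)]
    · simp [hij, hv j (by omega)]

lemma logForm_trunc_trunc {t t' : ℕ} (h : t ≤ t') (b : Fin n → ℝ) :
    logForm n (trunc t b) (trunc t' b) = psum t b * (psum t' b - psum t b) := by
  have hsplit : trunc t' b = trunc t b + (trunc t' b - trunc t b) := by abel
  rw [hsplit, map_add, logForm_self, zero_add, logForm_of_lt (K := t)]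
  · simp only [Pi.sub_apply, sum_sub_distrib, sum_trunc]
  · intro i hi
    simp only [trunc, if_neg (not_lt.2 hi)]
  · intro j hj
    simp only [trunc, Pi.sub_apply, if_pos hj, if_pos (hj.trans_le h)]
    ring

-- `J_m` and `I_m` are the Laurent monomials with these exponent vectors (`ε_m` and `η_m`).
def jExponent (m : ℕ) : Fin n → ℝ :=
  fun i => if i.val < 2 * m then (if Even i.val then 1 else -1) else 0

def iExponent (m : ℕ) : Fin n → ℝ :=
  fun i => if 2 * m ≤ i.val then (if Odd i.val then 1 else -1) else 0

lemma sum_range_jExponent (m t : ℕ) :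
    ∑ k ∈ range t, (if k < 2 * m then (if Even k then 1 else -1 : ℝ) else 0)
      = if Odd t ∧ t ≤ 2 * m then 1 else 0 := by
  induction t with
  | zero => simp
  | succ t ih =>
    rw [sum_range_succ, ih]
    simp only [Nat.odd_iff, Nat.even_iff]
    split_ifs <;> first | omega | norm_num

lemma sum_range_iExponent (m t : ℕ) :
    ∑ k ∈ range t, (if 2 * m ≤ k then (if Odd k then 1 else -1 : ℝ) else 0)
      = if Odd t ∧ 2 * m < t then -1 else 0 := by
  induction t with
  | zero => simp
  | succ t ih =>
    rw [sum_range_succ, ih]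
    simp only [Nat.odd_iff]
    split_ifs <;> first | omega | norm_num

lemma psum_jExponent (m : ℕ) {t : ℕ} (ht : t ≤ n) :
    psum t (jExponent m : Fin n → ℝ) = if Odd t ∧ t ≤ 2 * m then 1 else 0 :=
  (psum_comp_val (fun k => if k < 2 * m then (if Even k then 1 else -1) else 0) ht).trans
    (sum_range_jExponent m t)

lemma psum_iExponent (m : ℕ) {t : ℕ} (ht : t ≤ n) :
    psum t (iExponent m : Fin n → ℝ) = if Odd t ∧ 2 * m < t then -1 else 0 :=
  (psum_comp_val (fun k => if 2 * m ≤ k then (if Odd k then 1 else -1) else 0) ht).trans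
    (sum_range_iExponent m t)

lemma psum_two_mul_jExponent (m : ℕ) {k : ℕ} (hk : 2 * k ≤ n) :
    psum (2 * k) (jExponent m : Fin n → ℝ) = 0 := by
  simp [psum_jExponent m hk]

lemma psum_two_mul_iExponent (m : ℕ) {k : ℕ} (hk : 2 * k ≤ n) :
    psum (2 * k) (iExponent m : Fin n → ℝ) = 0 := by
  simp [psum_iExponent m hk]

variable {N : ℕ}

lemma logForm_jExponent (m : ℕ) (w : Fin (2 * N) → ℝ) :
    logForm (2 * N) (jExponent m) w = psum (2 * m) w := by
  rw [logForm_eq_sum_psum, psum_apply (2 * m) w, sum_filter]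
  refine sum_congr rfl fun j _ => ?_
  have hj := j.isLt
  rw [psum_jExponent m hj.le, psum_jExponent m hj, psum_jExponent m le_rfl]
  simp only [Nat.odd_iff]
  split_ifs <;> first | omega | ring

lemma logForm_iExponent (m : ℕ) (w : Fin (2 * N) → ℝ) :
    logForm (2 * N) (iExponent m) w = psum (2 * m) w - ∑ i, w i := by
  rw [logForm_eq_sum_psum, psum_apply (2 * m) w, sum_filter, ← sum_sub_distrib]
  refine sum_congr rfl fun j _ => ?_
  have hj := j.isLt
  rw [psum_iExponent m hj.le, psum_iExponent m hj, psum_iExponent m le_rfl]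
  simp only [Nat.odd_iff]
  split_ifs <;> first | omega | ring

lemma logForm_trunc_iExponent {t m : ℕ} (h : t ≤ 2 * m) (b : Fin (2 * N) → ℝ) :
    logForm (2 * N) (trunc t b) (iExponent m) = 0 := by
  rw [logForm_swap, logForm_iExponent, psum_trunc, sum_trunc, min_eq_right h, sub_self, neg_zero]

lemma logForm_iExponent_iExponent {m : ℕ} (hm : m ≤ N) (m' : ℕ) :
    logForm (2 * N) (iExponent m) (iExponent m') = 0 := by
  rw [logForm_iExponent, ← psum_of_le le_rfl, psum_two_mul_iExponent m' (by omega),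
    psum_two_mul_iExponent m' le_rfl, sub_zero]

section PartialDerivatives

variable {f g : (Fin n → ℝ) → ℝ} {x : Fin n → ℝ}

lemma pd_mul (hf : DifferentiableAt ℝ f x) (hg : DifferentiableAt ℝ g x) (i : Fin n) :
    pd (fun y => f y * g y) x i = pd f x i * g x + f x * pd g x i := by
  simp only [pd, fderiv_fun_mul hf hg, add_apply, smul_apply, smul_eq_mul]
  ring

lemma pd_div (hf : DifferentiableAt ℝ f x) (hg : DifferentiableAt ℝ g x) (hgx : g x ≠ 0)
    (i : Fin n) : pd (fun y => f y / g y) x i = (pd f x i * g x - f x * pd g x i) / g x ^ 2 := by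
  have h := hf.hasFDerivAt.fun_mul ((hasDerivAt_inv hgx).comp_hasFDerivAt x hg.hasFDerivAt)
  simp only [div_eq_mul_inv, Function.comp_def] at h ⊢
  simp only [pd, h.fderiv, add_apply, smul_apply, smul_eq_mul]
  field_simp
  ring

lemma mul_pd_prod (s : Finset (Fin n)) (x : Fin n → ℝ) (i : Fin n) :
    x i * pd (fun y => ∏ j ∈ s, y j) x i = if i ∈ s then ∏ j ∈ s, x j else 0 := by
  rw [pd, hasFDerivAt_finsetProd.fderiv]
  simp only [FunLike.coe_sum, Finset.sum_apply, smul_apply, ContinuousLinearMap.proj_apply,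
    Pi.single_apply, smul_eq_mul, mul_ite, mul_one, mul_zero, sum_ite_eq']
  split_ifs with hi
  · exact mul_prod_erase s x hi
  · rfl

lemma pd_sum_mul (a : Fin n → ℝ) (s : Finset (Fin n)) (x : Fin n → ℝ) (i : Fin n) :
    pd (fun y => ∑ j ∈ s, a j * y j) x i = if i ∈ s then a i else 0 := by
  have h : HasFDerivAt (fun y : Fin n → ℝ => ∑ j ∈ s, a j * y j)
      (∑ j ∈ s, a j • ContinuousLinearMap.proj (R := ℝ) (φ := fun _ : Fin n => ℝ) j) x :=
    HasFDerivAt.fun_sum fun j _ =>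
      (ContinuousLinearMap.proj (R := ℝ) (φ := fun _ : Fin n => ℝ) j).hasFDerivAt.const_mul (a j)
  rw [pd, h.fderiv]
  simp [Pi.single_apply]

lemma pd_vfun (a : Fin n → ℝ) (t : ℕ) (i : Fin n) :
    pd (vfun a t) x i = if i.val < t then a i else 0 := by
  unfold vfun
  rw [pd_sum_mul]
  simp only [mem_filter, mem_univ, true_and]

end PartialDerivatives

noncomputable def logGrad (f : (Fin n → ℝ) → ℝ) (x : Fin n → ℝ) : Fin n → ℝ :=
  fun i => x i * pd f x i

lemma pb_eq_logForm (f g : (Fin n → ℝ) → ℝ) (x : Fin n → ℝ) :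
    pb f g x = logForm n (logGrad f x) (logGrad g x) := by
  simp only [pb, logForm_apply, logGrad]
  refine sum_congr rfl fun i _ => sum_congr rfl fun j _ => ?_
  split_ifs <;> ring

lemma pb_swap (f g : (Fin n → ℝ) → ℝ) (x : Fin n → ℝ) : pb g f x = -pb f g x := by
  rw [pb_eq_logForm, pb_eq_logForm, logForm_swap]

section LaurentMonomials

variable {x : Fin n → ℝ}

lemma differentiableAt_prod_div_prod (s t : Finset (Fin n)) (hx : ∀ i ∈ t, x i ≠ 0) :
    DifferentiableAt ℝ (fun y => (∏ j ∈ s, y j) / ∏ j ∈ t, y j) x := by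
  fun_prop (disch := exact prod_ne_zero_iff.mpr hx)

lemma logGrad_prod_div_prod (s t : Finset (Fin n)) (hx : ∀ i ∈ t, x i ≠ 0) :
    logGrad (fun y => (∏ j ∈ s, y j) / ∏ j ∈ t, y j) x
      = ((∏ j ∈ s, x j) / ∏ j ∈ t, x j) •
          fun i => (if i ∈ s then 1 else 0) - if i ∈ t then 1 else 0 := by
  have hQ : ∏ j ∈ t, x j ≠ 0 := prod_ne_zero_iff.mpr hx
  funext i
  have hmul : ∀ P Q P' Q' : ℝ,
      x i * ((P' * Q - P * Q') / Q ^ 2) = (x i * P' * Q - P * (x i * Q')) / Q ^ 2 :=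
    fun _ _ _ _ => by ring
  rw [logGrad, pd_div (by fun_prop) (by fun_prop) hQ, hmul, mul_pd_prod, mul_pd_prod,
    Pi.smul_apply, smul_eq_mul]
  field_simp
  split_ifs <;> ring

lemma logGrad_Jfun (m : ℕ) (hx : ∀ i, x i ≠ 0) :
    logGrad (Jfun m) x = Jfun m x • jExponent m := by
  unfold Jfun
  rw [logGrad_prod_div_prod _ _ fun i _ => hx i]
  congr 1
  funext i
  simp only [jExponent, mem_filter, mem_univ, true_and, Nat.even_iff, Nat.odd_iff]
  split_ifs <;> first | omega | norm_num

lemma logGrad_Ifun (m : ℕ) (hx : ∀ i, x i ≠ 0) :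
    logGrad (Ifun m) x = Ifun m x • iExponent m := by
  unfold Ifun
  rw [logGrad_prod_div_prod _ _ fun i _ => hx i]
  congr 1
  funext i
  simp only [iExponent, mem_filter, mem_univ, true_and, Nat.even_iff, Nat.odd_iff]
  split_ifs <;> first | omega | norm_num

lemma logGrad_Ffun (a : Fin n → ℝ) (m : ℕ) (hx : ∀ i, x i ≠ 0) :
    logGrad (Ffun a m) x = Ifun m x • trunc (2 * m) (a * x) + Ffun a m x • iExponent m := by
  funext i
  have hI := congrFun (logGrad_Ifun m hx) i
  simp only [logGrad, Pi.smul_apply, smul_eq_mul] at hI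
  have hv : DifferentiableAt ℝ (vfun a (2 * m)) x := by unfold vfun; fun_prop
  have hIdiff : DifferentiableAt ℝ (Ifun m) x :=
    differentiableAt_prod_div_prod _ _ fun i _ => hx i
  unfold Ffun
  simp only [logGrad, Pi.add_apply, Pi.smul_apply, smul_eq_mul, trunc, Pi.mul_apply]
  rw [pd_mul hv hIdiff, pd_vfun]
  split_ifs <;> linear_combination vfun a (2 * m) x * hI

lemma Jfun_ne_zero (m : ℕ) (hx : ∀ i, x i ≠ 0) : Jfun m x ≠ 0 :=
  div_ne_zero (prod_ne_zero_iff.2 fun i _ => hx i) (prod_ne_zero_iff.2 fun i _ => hx i)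

lemma Ifun_ne_zero (m : ℕ) (hx : ∀ i, x i ≠ 0) : Ifun m x ≠ 0 :=
  div_ne_zero (prod_ne_zero_iff.2 fun i _ => hx i) (prod_ne_zero_iff.2 fun i _ => hx i)

end LaurentMonomials

section Involution

variable {x : Fin (2 * N) → ℝ}

lemma pb_Jfun_Jfun {m : ℕ} (hm : m ≤ N) (m' : ℕ) (hx : ∀ i, x i ≠ 0) :
    pb (Jfun m) (Jfun m') x = 0 := by
  rw [pb_eq_logForm, logGrad_Jfun m hx, logGrad_Jfun m' hx, map_smul, map_smul,
    LinearMap.smul_apply, logForm_jExponent, psum_two_mul_jExponent m' (by omega)]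
  simp

lemma pb_Jfun_Ffun {m : ℕ} (hm : m ≤ N) {a : Fin (2 * N) → ℝ}
    (ha : ∀ j : Fin (2 * N), j.val < 2 * m → a j = 0) (m' : ℕ) (hx : ∀ i, x i ≠ 0) :
    pb (Jfun m) (Ffun a m') x = 0 := by
  have hv : psum (min (2 * m) (2 * m')) (a * x) = 0 := by
    rw [psum_apply]
    refine sum_eq_zero fun j hj => ?_
    rw [Pi.mul_apply, ha j (lt_min_iff.1 (mem_filter.1 hj).2).1, zero_mul]
  rw [pb_eq_logForm, logGrad_Jfun m hx, logGrad_Ffun a m' hx]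
  simp only [map_smul, map_add, LinearMap.smul_apply, logForm_jExponent, psum_trunc, hv,
    psum_two_mul_iExponent m' (show 2 * m ≤ 2 * N by omega)]
  simp

lemma pb_Ffun_Ffun (a : Fin (2 * N) → ℝ) {m m' : ℕ} (hmm' : m ≤ m') (hm' : m' ≤ N)
    (hx : ∀ i, x i ≠ 0) : pb (Ffun a m) (Ffun a m') x = 0 := by
  rw [pb_eq_logForm, logGrad_Ffun a m hx, logGrad_Ffun a m' hx]
  simp only [map_add, map_smul, LinearMap.add_apply, LinearMap.smul_apply, smul_eq_mul]
  rw [logForm_trunc_trunc (by omega), logForm_trunc_iExponent (by omega), logForm_iExponent,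
    logForm_iExponent_iExponent (by omega), psum_trunc, sum_trunc, min_eq_left (by omega), Ffun,
    vfun_eq_psum]
  ring

end Involution

lemma Ffun_eq_sum (a : Fin (2 * N) → ℝ) : Ffun a N = fun x => ∑ i, a i * x i := by
  funext x
  have hI : Ifun N x = 1 := by
    have hnone : ∀ i : Fin (2 * N), ¬2 * N ≤ i.val := fun i => not_le.2 i.isLt
    simp [Ifun, hnone]
  rw [Ffun, hI, mul_one, vfun_eq_psum, psum_of_le le_rfl]
  rfl

noncomputable def firstIntegral (a : Fin (2 * N) → ℝ) (r : ℕ) (p : Fin N) :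
    (Fin (2 * N) → ℝ) → ℝ :=
  if p.val < r then Jfun (p.val + 1) else Ffun a (p.val + 1)

lemma linearIndependent_of_triangular {K ι V : Type*} [Ring K] [NoZeroDivisors K] [Fintype ι]
    [LinearOrder ι] [AddCommGroup V] [Module K V] {v : ι → V} (φ : ι → V →ₗ[K] K)
    (hlt : ∀ p q, q < p → φ p (v q) = 0) (hdiag : ∀ p, φ p (v p) ≠ 0) :
    LinearIndependent K v := by
  rw [Fintype.linearIndependent_iff]
  intro g hg p
  induction p using WellFoundedGT.induction with
  | _ p ih =>
    have h := congrArg (φ p) hg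
    simp only [map_sum, map_smul, smul_eq_mul, map_zero] at h
    rw [sum_eq_single p (fun q _ hqp => ?_) (by simp)] at h
    · exact (mul_eq_zero.1 h).resolve_right (hdiag p)
    · rcases lt_or_gt_of_ne hqp with hq | hq
      · rw [hlt p q hq, mul_zero]
      · rw [ih q hq, zero_mul]

lemma psum_logGrad_Jfun (m : ℕ) {k : ℕ} (hk : 2 * k + 1 ≤ n) {x : Fin n → ℝ}
    (hx : ∀ i, x i ≠ 0) :
    psum (2 * k + 1) (logGrad (Jfun m) x) = if k < m then Jfun m x else 0 := by
  rw [logGrad_Jfun m hx, map_smul, psum_jExponent m hk, smul_eq_mul]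
  simp only [Nat.odd_iff]
  split_ifs <;> first | omega | simp

lemma psum_logGrad_Ffun (a : Fin n → ℝ) (m : ℕ) {k : ℕ} (hk : 2 * k + 1 ≤ n) {x : Fin n → ℝ}
    (hx : ∀ i, x i ≠ 0) :
    psum (2 * k + 1) (logGrad (Ffun a m) x)
      = if k < m then Ifun m x * vfun a (2 * k + 1) x else 0 := by
  rw [logGrad_Ffun a m hx, map_add, map_smul, map_smul, psum_trunc, psum_iExponent m hk, Ffun,
    vfun_eq_psum, vfun_eq_psum, smul_eq_mul, smul_eq_mul]
  by_cases hkm : k < m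
  · rw [min_eq_left (by omega), if_neg (by omega), if_pos hkm]
    ring
  · rw [min_eq_right (by omega), if_pos ⟨by simp, by omega⟩, if_neg hkm]
    ring

open Filter Topology in
lemma exists_pos_vfun_ne_zero (a : Fin n → ℝ) (ℓ : Fin n) (hℓ : a ℓ ≠ 0) :
    ∃ x : Fin n → ℝ, (∀ i, 0 < x i) ∧ ∀ t ≤ n, ℓ.val < t → vfun a t x ≠ 0 := by
  let y : ℝ → Fin n → ℝ := fun s i => if i = ℓ then 1 else s
  have hlim : ∀ t, ℓ.val < t → ∀ᶠ s in 𝓝 (0 : ℝ), vfun a t (y s) ≠ 0 := by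
    intro t ht
    have hcont : Continuous fun s => vfun a t (y s) := by
      refine continuous_finsetSum _ fun j _ => continuous_const.mul ?_
      by_cases hj : j = ℓ <;> simp only [y, hj, ↓reduceIte] <;> fun_prop
    have hy0 : vfun a t (y 0) = a ℓ := by
      simp only [vfun, y, mul_ite, mul_one, mul_zero, sum_ite_eq', mem_filter, mem_univ, true_and,
        if_pos ht]
    exact hcont.continuousAt.eventually_ne (hy0 ▸ hℓ)
  have hev : ∀ᶠ s in 𝓝[>] (0 : ℝ),
      s ∈ Set.Ioi 0 ∧ ∀ t ∈ range (n + 1), ℓ.val < t → vfun a t (y s) ≠ 0 :=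
    eventually_mem_nhdsWithin.and <| (eventually_all_finset _).2 fun t _ => by
      by_cases ht : ℓ.val < t
      · exact ((hlim t ht).filter_mono nhdsWithin_le_nhds).mono fun s hs _ => hs
      · exact Eventually.of_forall fun s h => absurd h ht
  obtain ⟨s, hs, hv⟩ := hev.exists
  refine ⟨y s, fun i => ?_, fun t ht => hv t (mem_range.2 (by omega))⟩
  by_cases hi : i = ℓ <;> simp [y, hi, Set.mem_Ioi.1 hs]

section FirstIntegrals

variable {a : Fin (2 * N) → ℝ} {r : ℕ} {x : Fin (2 * N) → ℝ}

lemma pb_firstIntegral (ha : ∀ j : Fin (2 * N), j.val < 2 * r → a j = 0) (hx : ∀ i, x i ≠ 0)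
    (p q : Fin N) : pb (firstIntegral a r p) (firstIntegral a r q) x = 0 := by
  wlog hpq : p ≤ q generalizing p q
  · rw [pb_swap, this q p (le_of_not_ge hpq), neg_zero]
  have hpq' : p.val ≤ q.val := hpq
  unfold firstIntegral
  split_ifs with hp hq hq
  · exact pb_Jfun_Jfun (by omega) _ hx
  · exact pb_Jfun_Ffun (by omega) (fun j hj => ha j (by omega)) _ hx
  · omega
  · exact pb_Ffun_Ffun a (by omega) (by omega) hx

lemma psum_logGrad_firstIntegral (hx : ∀ i, x i ≠ 0) (k p : Fin N) :
    psum (2 * k.val + 1) (logGrad (firstIntegral a r p) x)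
      = if k ≤ p then
          (if p.val < r then Jfun (p.val + 1) x else Ifun (p.val + 1) x * vfun a (2 * k + 1) x)
        else 0 := by
  have hk : 2 * k.val + 1 ≤ 2 * N := by omega
  have hkp : k ≤ p ↔ k.val < p.val + 1 := by rw [Fin.le_def]; omega
  unfold firstIntegral
  by_cases hp : p.val < r <;>
    simp only [hp, hkp, ↓reduceIte, psum_logGrad_Jfun _ hk hx, psum_logGrad_Ffun a _ hk hx]

lemma logGrad_firstIntegral_apply {i : Fin (2 * N)} (hr : 2 * r ≤ i.val)
    (hr' : i.val < 2 * r + 2) (hx : ∀ i, x i ≠ 0) (p : Fin N) :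
    logGrad (firstIntegral a r p) x i
      = if p.val < r then 0 else Ifun (p.val + 1) x * (a i * x i) := by
  unfold firstIntegral
  split_ifs with hp
  · rw [logGrad_Jfun _ hx, Pi.smul_apply, jExponent, if_neg (by omega), smul_zero]
  · rw [logGrad_Ffun a _ hx, Pi.add_apply, Pi.smul_apply, Pi.smul_apply, trunc, iExponent,
      if_pos (by omega), if_neg (by omega), smul_zero, add_zero, smul_eq_mul, Pi.mul_apply]

lemma linearIndependent_logGrad_firstIntegral {ℓ : ℕ} (hℓ : ℓ < 2 * N) (hℓa : a ⟨ℓ, hℓ⟩ ≠ 0)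
    (hx : ∀ i, x i ≠ 0) (hv : ∀ t ≤ 2 * N, ℓ < t → vfun a t x ≠ 0) :
    LinearIndependent ℝ fun p : Fin N => logGrad (firstIntegral a (ℓ / 2) p) x := by
  have hℓ2 : 2 * (ℓ / 2) ≤ ℓ ∧ ℓ < 2 * (ℓ / 2) + 2 := by omega
  refine linearIndependent_of_triangular
    (fun p => if p.val = ℓ / 2 then LinearMap.proj ⟨ℓ, hℓ⟩ else psum (2 * p.val + 1))
    (fun p q hqp => ?_) (fun p => ?_)
  · have hqp' : q.val < p.val := hqp
    split_ifs with hp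
    · rw [LinearMap.proj_apply, logGrad_firstIntegral_apply hℓ2.1 hℓ2.2 hx,
        if_pos (by omega)]
    · rw [psum_logGrad_firstIntegral hx, if_neg (not_le.2 hqp)]
  · split_ifs with hp
    · rw [LinearMap.proj_apply, logGrad_firstIntegral_apply hℓ2.1 hℓ2.2 hx,
        if_neg (by omega)]
      exact mul_ne_zero (Ifun_ne_zero _ hx) (mul_ne_zero hℓa (hx _))
    · rw [psum_logGrad_firstIntegral hx, if_pos le_rfl]
      split_ifs with hpr
      · exact Jfun_ne_zero _ hx
      · exact mul_ne_zero (Ifun_ne_zero _ hx) (hv _ (by omega) (by omega))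

end FirstIntegrals

theorem stmt_3_general (N : ℕ) (a : Fin (2*N) → ℝ)
    (ℓ : ℕ) (hℓ : ℓ < 2*N) (hℓ1 : a ⟨ℓ, hℓ⟩ ≠ 0)
    (hℓ0 : ∀ j : Fin (2*N), j.val < ℓ → a j = 0)
    (G : Fin N → (Fin (2*N) → ℝ) → ℝ)
    (hG : ∀ p : Fin N, G p =
      if p.val < ℓ/2 then Jfun (p.val+1)
      else if p.val < N - 1 then Ffun a (p.val+1)
      else fun x => ∑ i, a i * x i) :
    (∀ p q : Fin N, ∀ x : Fin (2*N) → ℝ, (∀ i, 0 < x i) → pb (G p) (G q) x = 0) ∧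
    (∃ x : Fin (2*N) → ℝ, (∀ i, 0 < x i) ∧
      LinearIndependent ℝ (fun p : Fin N => fun i : Fin (2*N) => pd (G p) x i)) := by
  have hGI : G = firstIntegral a (ℓ / 2) := by
    funext p
    rw [hG p, firstIntegral]
    split_ifs with h1 h2 <;> try rfl
    rw [show p.val + 1 = N by omega, Ffun_eq_sum]
  subst hGI
  refine ⟨fun p q x hx => pb_firstIntegral (fun j hj => hℓ0 j (by omega))
    (fun i => (hx i).ne') p q, ?_⟩
  obtain ⟨x, hx, hv⟩ := exists_pos_vfun_ne_zero a ⟨ℓ, hℓ⟩ hℓ1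
  exact ⟨x, hx, LinearIndependent.of_comp (LinearMap.mulLeft ℝ x)
    (linearIndependent_logGrad_firstIntegral hℓ hℓ1 (fun i => (hx i).ne') hv)⟩

/-- Theorem 4.1 of the paper: for even `n = 2N`, `a ≠ 0`, `ℓ` the smallest index with
`a_{ℓ+1} ≠ 0` (0-based: `a ℓ ≠ 0`) and `λ = ⌊ℓ/2⌋`, the `N` functions
`J_1,…,J_λ, F_{λ+1},…,F_{N−1}, H_0` are pairwise in involution and functionally independent. -/
theorem stmt_3 (N : ℕ) (a : Fin (2*N) → ℝ) (ha : a ≠ 0)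
    (ℓ : ℕ) (hℓ : ℓ < 2*N) (hℓ1 : a ⟨ℓ, hℓ⟩ ≠ 0)
    (hℓ0 : ∀ j : Fin (2*N), j.val < ℓ → a j = 0)
    (G : Fin N → (Fin (2*N) → ℝ) → ℝ)
    (hG : ∀ p : Fin N, G p =
      if p.val < ℓ/2 then Jfun (p.val+1)
      else if p.val < N - 1 then Ffun a (p.val+1)
      else fun x => ∑ i, a i * x i) :
    (∀ p q : Fin N, ∀ x : Fin (2*N) → ℝ, (∀ i, 0 < x i) → pb (G p) (G q) x = 0) ∧
    (∃ x : Fin (2*N) → ℝ, (∀ i, 0 < x i) ∧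
      LinearIndependent ℝ (fun p : Fin N => fun i : Fin (2*N) => pd (G p) x i)) :=
  stmt_3_general N a ℓ hℓ hℓ1 hℓ0 G hG
end

section
/- Let n be even, a, k ∈ ℝ^n, suppose a_1 = a_2 = ⋯ = a_ℓ = 0 and a_{ℓ+1} ≠ 0, and let λ = ⌊ℓ/2⌋. Then for every m = 1,...,λ and every x in the positive orthant (0,∞)^n, {J_m, H}(x) = J_m(x) (k_1 + k_2 + ⋯ + k_{2m}), where the bracket is the log-canonical Poisson bracket. -/
/-!
If `x_i ∂f/∂x_i = ε_i f` and `x_i ∂g/∂x_i = b_i`, the log-canonical bracket is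
`{f, g} = f Σ_{i<j} (ε_i b_j − ε_j b_i)`. Here `J_m` is the Laurent monomial with exponents
`ε_i = (-1)^i` for `i < 2m` and `0` beyond, and `x_i ∂H/∂x_i = a_i x_i + k_i`. For such `ε` and an
even number of variables the double sum collapses to `Σ_{i<2m} b_i` (the alternating sum of an
even number of signs vanishes), and `b_i = k_i` for `i < 2m ≤ ℓ` since `a` vanishes there.
-/

open Finset

def jExp (m i : ℕ) : ℤ := if i < 2 * m then (-1) ^ i else 0

-- Valid at every point: a zero coordinate gives `0` on both sides, as `0⁻¹ = 0`.
lemma Jfun_eq_prod_zpow {n : ℕ} (m : ℕ) :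
    Jfun (n := n) m = fun y => ∏ i : Fin n, y i ^ jExp m i := by
  funext y
  rw [Jfun, div_eq_mul_inv, ← prod_inv_distrib, prod_filter, prod_filter, ← prod_mul_distrib]
  refine prod_congr rfl fun i _ => ?_
  rcases Nat.even_or_odd i.val with h | h
  · have := Nat.not_odd_iff_even.mpr h
    by_cases hi : i.val < 2 * m <;> simp [jExp, hi, h, this, h.neg_one_pow]
  · have := Nat.not_even_iff_odd.mpr h
    by_cases hi : i.val < 2 * m <;> simp [jExp, hi, h, this, h.neg_one_pow]

lemma pd_eq_deriv_update {n : ℕ} {f : (Fin n → ℝ) → ℝ} {x : Fin n → ℝ}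
    (hf : DifferentiableAt ℝ f x) (i : Fin n) :
    pd f x i = deriv (fun t => f (Function.update x i t)) (x i) := by
  rw [← Function.update_eq_self i x] at hf
  exact ((hf.hasFDerivAt.comp_hasDerivAt (x i) (hasDerivAt_update x i (x i))).deriv.trans
    (by simp [pd])).symm

lemma mul_pd_prod_zpow {n : ℕ} (e : Fin n → ℤ) {x : Fin n → ℝ} (hx : ∀ j, x j ≠ 0)
    (i : Fin n) :
    x i * pd (fun y => ∏ j, y j ^ e j) x i = e i * ∏ j, x j ^ e j := by
  have hd : DifferentiableAt ℝ (fun y : Fin n → ℝ => ∏ j, y j ^ e j) x := by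
    fun_prop (disch := exact Or.inl (hx _))
  have hupd : (fun t => ∏ j, Function.update x i t j ^ e j)
      = fun t => t ^ e i * ∏ j ∈ univ \ {i}, x j ^ e j := funext fun t => by
    rw [← prod_update_of_mem (mem_univ i) (fun j => x j ^ e j)]
    exact prod_congr rfl fun j _ => Function.apply_update (fun j (s : ℝ) => s ^ e j) x i t j
  rw [pd_eq_deriv_update hd, hupd, deriv_mul_const (differentiableAt_zpow.2 (Or.inl (hx i))),
    deriv_zpow, ← mul_prod_erase _ _ (mem_univ i), zpow_sub_one₀ (hx i),
    sdiff_singleton_eq_erase]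
  field_simp [hx i]

lemma mul_pd_Hfun {n : ℕ} (a k : Fin n → ℝ) {x : Fin n → ℝ} (hx : ∀ j, x j ≠ 0) (i : Fin n) :
    x i * pd (Hfun a k) x i = a i * x i + k i := by
  have hd : DifferentiableAt ℝ (Hfun a k) x := by
    unfold Hfun
    fun_prop (disch := exact hx _)
  have hupd : (fun t => Hfun a k (Function.update x i t))
      = fun t => a i * t + k i * Real.log t
          + ∑ j ∈ univ \ {i}, (a j * x j + k j * Real.log (x j)) := funext fun t => by
    rw [← sum_update_of_mem (mem_univ i) (fun j => a j * x j + k j * Real.log (x j))]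
    exact sum_congr rfl fun j _ =>
      Function.apply_update (fun j (s : ℝ) => a j * s + k j * Real.log s) x i t j
  have hderiv : HasDerivAt (fun t => Hfun a k (Function.update x i t))
      (a i + k i * (x i)⁻¹) (x i) := by
    rw [hupd]
    exact ((((hasDerivAt_id _).const_mul (a i)).add
      ((Real.hasDerivAt_log (hx i)).const_mul (k i))).add_const _).congr_deriv (by simp)
  rw [pd_eq_deriv_update hd, hderiv.deriv]
  field_simp [hx i]

def pairSum (n : ℕ) (ε b : ℕ → ℝ) : ℝ :=
  ∑ i ∈ range n, ∑ j ∈ range n, if i < j then ε i * b j - ε j * b i else 0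

lemma pb_eq_mul_pairSum {n : ℕ} {f g : (Fin n → ℝ) → ℝ} {x : Fin n → ℝ} {ε b : ℕ → ℝ}
    (hf : ∀ i, x i * pd f x i = ε i * f x) (hg : ∀ i, x i * pd g x i = b i) :
    pb f g x = f x * pairSum n ε b := by
  rw [pairSum, mul_sum, ← Fin.sum_univ_eq_sum_range]
  refine sum_congr rfl fun i _ => ?_
  rw [mul_sum, ← Fin.sum_univ_eq_sum_range]
  refine sum_congr rfl fun j _ => ?_
  simp only [Fin.lt_def]
  split_ifs
  · linear_combination (x j * pd g x j) * hf i + ε i * f x * hg j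
      - (x i * pd g x i) * hf j - ε j * f x * hg i
  · rw [mul_zero]

lemma pairSum_congr {n : ℕ} {ε ε' : ℕ → ℝ} (h : ∀ i < n, ε i = ε' i) (b : ℕ → ℝ) :
    pairSum n ε b = pairSum n ε' b := by
  unfold pairSum
  refine sum_congr rfl fun i hi => sum_congr rfl fun j hj => ?_
  rw [h i (mem_range.1 hi), h j (mem_range.1 hj)]

lemma pairSum_succ (n : ℕ) (ε b : ℕ → ℝ) :
    pairSum (n + 1) ε b
      = pairSum n ε b + (∑ i ∈ range n, ε i) * b n - ε n * ∑ i ∈ range n, b i := by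
  have hlast : ∑ j ∈ range n, (if n < j then ε n * b j - ε j * b n else 0) = 0 :=
    sum_eq_zero fun j hj => if_neg (by simp at hj; omega)
  unfold pairSum
  simp_rw [sum_range_succ, sum_add_distrib]
  simp +contextual [hlast, sum_ite_of_true, sum_sub_distrib, sum_mul,
    mul_sum]
  ring

lemma pairSum_neg_one_pow (r : ℕ) (b : ℕ → ℝ) :
    pairSum r (fun i => (-1) ^ i) b = if Even r then ∑ i ∈ range r, b i else 0 := by
  induction r with
  | zero => simp [pairSum]
  | succ r ih =>
    rw [pairSum_succ, ih, neg_one_geom_sum, sum_range_succ]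
    rcases Nat.even_or_odd r with h | h
    · simp [h, Nat.even_add_one, h.neg_one_pow]
    · simp [h, h.neg_one_pow, Nat.not_even_iff_odd.2 h]
      ring

lemma pairSum_jExp (m : ℕ) {n : ℕ} (hn : Even n) (b : ℕ → ℝ) :
    pairSum n (fun i => jExp m i) b = ∑ i ∈ range n, if i < 2 * m then b i else 0 := by
  have hbase : ∀ r ≤ 2 * m, pairSum r (fun i => jExp m i) b = pairSum r (fun i => (-1) ^ i) b :=
    fun r hr => pairSum_congr (fun i hi => by simp [jExp, show i < 2 * m by omega]) b
  rcases le_total n (2 * m) with h | h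
  · rw [hbase n h, pairSum_neg_one_pow, if_pos hn]
    exact sum_congr rfl fun i hi => (if_pos (by simp at hi; omega)).symm
  clear hn
  induction n, h using Nat.le_induction with
  | base =>
    rw [hbase _ le_rfl, pairSum_neg_one_pow, if_pos (even_two_mul m)]
    exact sum_congr rfl fun i hi => (if_pos (mem_range.1 hi)).symm
  | succ n hle ih =>
    have hsum : ∑ i ∈ range n, (jExp m i : ℝ) = 0 := by
      have hlow : ∀ i ∈ range (2 * m), (jExp m i : ℝ) = (-1) ^ i :=
        fun i hi => by simp [jExp, mem_range.1 hi]
      rw [← sum_range_add_sum_Ico _ hle, sum_congr rfl hlow, neg_one_geom_sum,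
        if_pos (even_two_mul m), zero_add]
      exact sum_eq_zero fun i hi => by simp [jExp, (mem_Ico.1 hi).1.not_gt]
    rw [pairSum_succ, ih, hsum, sum_range_succ]
    simp [jExp, show ¬ n < 2 * m by omega]

theorem stmt_9_general (N : ℕ) (a k : Fin (2*N) → ℝ)
    (ℓ : ℕ)
    (hℓ0 : ∀ j : Fin (2*N), j.val < ℓ → a j = 0)
    (m : ℕ) (hm2 : m ≤ ℓ/2)
    (x : Fin (2*N) → ℝ) (hx : ∀ i, 0 < x i) :
    pb (Jfun m) (Hfun a k) x
      = Jfun m x * ∑ i ∈ Finset.univ.filter (fun i : Fin (2*N) => i.val < 2*m), k i := by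
  have hx0 : ∀ i, x i ≠ 0 := fun i => (hx i).ne'
  set b : ℕ → ℝ := fun t => if h : t < 2 * N then a ⟨t, h⟩ * x ⟨t, h⟩ + k ⟨t, h⟩ else 0
  have hJ : ∀ i : Fin (2 * N), x i * pd (Jfun m) x i = jExp m i * Jfun m x := fun i => by
    rw [Jfun_eq_prod_zpow]
    exact mul_pd_prod_zpow (fun j => jExp m j) hx0 i
  have hH : ∀ i : Fin (2 * N), x i * pd (Hfun a k) x i = b i := fun i => by
    simp [b, mul_pd_Hfun a k hx0 i]
  rw [pb_eq_mul_pairSum (ε := fun i => jExp m i) hJ hH, pairSum_jExp m (even_two_mul N),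
    sum_filter, ← Fin.sum_univ_eq_sum_range (fun t => if t < 2 * m then b t else 0)]
  refine congrArg _ (sum_congr rfl fun i _ => ?_)
  split_ifs with hi
  · simp [b, hℓ0 i (by omega)]
  · rfl

/-- Lemma 4.2 of the paper: for even `n = 2N`, if `a_1 = ⋯ = a_ℓ = 0`, `a_{ℓ+1} ≠ 0` and
`λ = ⌊ℓ/2⌋`, then for `1 ≤ m ≤ λ`, `{J_m, H} = J_m (k_1 + ⋯ + k_{2m})`. -/
theorem stmt_9 (N : ℕ) (a k : Fin (2*N) → ℝ)
    (ℓ : ℕ) (hℓ : ℓ < 2*N) (hℓ1 : a ⟨ℓ, hℓ⟩ ≠ 0)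
    (hℓ0 : ∀ j : Fin (2*N), j.val < ℓ → a j = 0)
    (m : ℕ) (hm1 : 1 ≤ m) (hm2 : m ≤ ℓ/2)
    (x : Fin (2*N) → ℝ) (hx : ∀ i, 0 < x i) :
    pb (Jfun m) (Hfun a k) x
      = Jfun m x * ∑ i ∈ Finset.univ.filter (fun i : Fin (2*N) => i.val < 2*m), k i :=
  stmt_9_general N a k ℓ hℓ0 m hm2 x hx
end

section
/- Let n be even, a, k ∈ ℝ^n with a ≠ 0, let ℓ denote the smallest integer such that a_{ℓ+1} ≠ 0 (so a_1 = ⋯ = a_ℓ = 0), and let λ = ⌊ℓ/2⌋. Then the n/2 functions J_1, J_2, ..., J_λ, F_{λ+1}, F_{λ+2}, ..., F_{n/2−1}, H are pairwise in involution with respect to the log-canonical Poisson bracket on (0,∞)^n if and only if k_{2i} = −k_{2i−1} for i = 1,...,λ and S_{jm} = 0 for all m = λ+1,...,n/2−1 and j = ℓ+1,...,2m. -/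
/-- `S_{jm} = a_j (−Σ_{i<j} k_i + Σ_{j<i≤2m} k_i)` (here `j : Fin n` is the 0-based index of
the 1-based index `j+1`). -/
def Sfun {n : ℕ} (a k : Fin n → ℝ) (j : Fin n) (m : ℕ) : ℝ :=
  a j * (-(∑ i ∈ Finset.univ.filter (fun i : Fin n => i.val < j.val), k i)
    + ∑ i ∈ Finset.univ.filter (fun i : Fin n => j.val < i.val ∧ i.val < 2*m), k i)

/-!
In log-coordinates the bracket is constant: `{f, g}(x) = ω(x ∂f, x ∂g)` with
`ω(A, B) = Σ_{i<j} (A_i B_j - A_j B_i)`. `J_m` and `I_m` are Laurent monomials, so `x ∂J_m` and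
`x ∂I_m` are the monomials times their exponent vectors, which alternate `±1` on an even block of
indices; pairing such a vector with `B` under `ω` just sums `B` over the block. This makes all
brackets among the `J`'s and `F`'s vanish (using `a_i = 0` below `ℓ`), and gives
`{J_p, H} = J_p Σ_{i ≤ 2p} k_i` and `{F_m, H} = I_m Σ_{j ≤ 2m} x_j S_{jm}`. The first vanishes for
all `p ≤ λ` iff the `k`'s cancel in consecutive pairs; the second, a linear form in `x`, vanishes
on the positive orthant iff all its coefficients `S_{jm}` do.
-/

open Finset

namespace LogCanonical

variable {n : ℕ}

def skewSign (i j : ℕ) : ℝ := if i < j then 1 else if j < i then -1 else 0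

lemma skewSign_swap (i j : ℕ) : skewSign j i = -skewSign i j := by
  unfold skewSign; split_ifs <;> first | omega | norm_num

/-- `skewForm A B = Σ_{i<j} (A i * B j - A j * B i)`. -/
noncomputable def skewForm : (Fin n → ℝ) →ₗ[ℝ] (Fin n → ℝ) →ₗ[ℝ] ℝ :=
  Matrix.toLinearMap₂' ℝ (Matrix.of fun i j : Fin n => skewSign i j)

lemma skewForm_apply (A B : Fin n → ℝ) :
    skewForm A B = ∑ i : Fin n, ∑ j : Fin n, A i * skewSign i j * B j := by
  simp only [skewForm, Matrix.toLinearMap₂'_apply, Matrix.of_apply, smul_eq_mul]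
  exact sum_congr rfl fun _ _ => sum_congr rfl fun _ _ => by ring

lemma skewForm_swap (A B : Fin n → ℝ) : skewForm B A = -skewForm A B := by
  rw [skewForm_apply, skewForm_apply, sum_comm, ← sum_neg_distrib]
  refine sum_congr rfl fun i _ => ?_
  rw [← sum_neg_distrib]
  refine sum_congr rfl fun j _ => ?_
  rw [skewSign_swap]; ring

lemma skewForm_self (A : Fin n → ℝ) : skewForm A A = 0 := by
  linarith [skewForm_swap A A]

def truncate (B : Fin n → ℝ) (r : ℕ) : Fin n → ℝ := fun i => if i.val < r then B i else 0

lemma truncate_truncate_of_le (B : Fin n → ℝ) {r s : ℕ} (h : r ≤ s) :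
    truncate (truncate B r) s = truncate B r := by
  funext i; unfold truncate; split_ifs <;> first | rfl | omega

lemma truncate_truncate_of_ge (B : Fin n → ℝ) {r s : ℕ} (h : s ≤ r) :
    truncate (truncate B r) s = truncate B s := by
  funext i; unfold truncate; split_ifs <;> first | rfl | omega

lemma truncate_of_le (B : Fin n → ℝ) {r : ℕ} (h : n ≤ r) : truncate B r = B := by
  funext i; simp only [truncate, if_pos (lt_of_lt_of_le i.isLt h)]

lemma truncate_eq_zero {B : Fin n → ℝ} {r : ℕ} (hB : ∀ i : Fin n, i.val < r → B i = 0) :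
    truncate B r = 0 := by
  funext i; simp only [truncate, Pi.zero_apply]; split_ifs with h; exacts [hB i h, rfl]

lemma sum_truncate_eq_sum_range (g : ℕ → ℝ) {r : ℕ} (h : r ≤ n) :
    ∑ i : Fin n, truncate (fun i => g i.val) r i = ∑ i ∈ range r, g i := by
  simp only [truncate]
  rw [Fin.sum_univ_eq_sum_range (fun i => if i < r then g i else 0) n, ← sum_filter]
  congr 1; ext i; simp only [mem_filter, mem_range]; omega

/-- The terms across the cut at `r` form a product, since `skewSign` is `1` there. -/
lemma skewForm_truncate_left (A B : Fin n → ℝ) (r : ℕ) :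
    skewForm (truncate A r) B = skewForm (truncate A r) (truncate B r)
      + (∑ i, truncate A r i) * (∑ i, B i - ∑ i, truncate B r i) := by
  simp only [skewForm_apply, ← sum_sub_distrib, sum_mul_sum, ← sum_add_distrib]
  refine sum_congr rfl fun i _ => sum_congr rfl fun j _ => ?_
  unfold truncate skewSign; split_ifs <;> first | omega | ring

def altPrefix (p : ℕ) : Fin n → ℝ := truncate (fun i => (-1) ^ i.val) (2 * p)

lemma sum_range_neg_one_pow_mul_skewSign (p j : ℕ) :
    ∑ i ∈ range (2 * p), (-1) ^ i * skewSign i j = if j < 2 * p then 1 else 0 := by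
  induction p with
  | zero => simp
  | succ p ih =>
    rw [show 2 * (p + 1) = 2 * p + 1 + 1 by ring, sum_range_succ, sum_range_succ, ih,
      pow_succ, pow_mul]
    simp only [neg_one_sq, one_pow, one_mul, skewSign]; split_ifs <;> first | omega | ring

lemma sum_range_ite_neg_one_pow (p q : ℕ) :
    ∑ i ∈ range (2 * p), (if i < 2 * q then (-1 : ℝ) ^ i else 0) = 0 := by
  induction p with
  | zero => simp
  | succ p ih =>
    rw [show 2 * (p + 1) = 2 * p + 1 + 1 by ring, sum_range_succ, sum_range_succ, ih,
      pow_succ, pow_mul]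
    simp only [neg_one_sq, one_pow, one_mul]; split_ifs <;> first | omega | ring

lemma skewForm_altPrefix {p : ℕ} (hp : 2 * p ≤ n) (B : Fin n → ℝ) :
    skewForm (altPrefix p) B = ∑ i, truncate B (2 * p) i := by
  have hcol (j : Fin n) :
      ∑ i : Fin n, altPrefix p i * skewSign i j = if j.val < 2 * p then 1 else 0 := by
    rw [← sum_range_neg_one_pow_mul_skewSign p j, ← sum_truncate_eq_sum_range _ hp]
    exact sum_congr rfl fun i _ => by simp only [altPrefix, truncate]; split_ifs <;> simp
  rw [skewForm_apply, sum_comm]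
  refine sum_congr rfl fun j _ => ?_
  rw [← sum_mul, hcol, truncate]; split_ifs <;> simp

lemma sum_truncate_altPrefix {p : ℕ} (hp : 2 * p ≤ n) (q : ℕ) :
    ∑ i, truncate (altPrefix (n := n) q) (2 * p) i = 0 := by
  rw [← sum_range_ite_neg_one_pow p q, ← sum_truncate_eq_sum_range _ hp]
  exact sum_congr rfl fun i _ => by simp only [altPrefix, truncate]

lemma skewForm_altPrefix_altPrefix {p : ℕ} (hp : 2 * p ≤ n) (q : ℕ) :
    skewForm (altPrefix p) (altPrefix (n := n) q) = 0 := by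
  rw [skewForm_altPrefix hp, sum_truncate_altPrefix hp]

noncomputable def logGrad (f : (Fin n → ℝ) → ℝ) (x : Fin n → ℝ) : Fin n → ℝ :=
  fun i => x i * pd f x i

lemma pb_eq_skewForm (f g : (Fin n → ℝ) → ℝ) (x : Fin n → ℝ) :
    pb f g x = skewForm (logGrad f x) (logGrad g x) := by
  set F := logGrad f x
  set G := logGrad g x
  calc pb f g x
      = ∑ i, ∑ j, (if i < j then F i * G j else 0)
          - ∑ i, ∑ j, (if i < j then F j * G i else 0) := by
        rw [pb, ← sum_sub_distrib]
        refine sum_congr rfl fun i _ => ?_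
        rw [← sum_sub_distrib]
        refine sum_congr rfl fun j _ => ?_
        simp only [F, G, logGrad]; split_ifs <;> ring
    _ = ∑ i, ∑ j, (if i < j then F i * G j else 0)
          - ∑ i, ∑ j, (if j < i then F i * G j else 0) := by
        rw [sum_comm (f := fun i j => if i < j then F j * G i else 0)]
    _ = skewForm F G := by
        rw [skewForm_apply, ← sum_sub_distrib]
        refine sum_congr rfl fun i _ => ?_
        rw [← sum_sub_distrib]
        refine sum_congr rfl fun j _ => ?_
        simp only [skewSign, Fin.lt_def]; split_ifs <;> first | omega | ring

lemma pb_swap (f g : (Fin n → ℝ) → ℝ) (x : Fin n → ℝ) : pb g f x = -pb f g x := by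
  rw [pb_eq_skewForm, pb_eq_skewForm, skewForm_swap]

lemma pb_self (f : (Fin n → ℝ) → ℝ) (x : Fin n → ℝ) : pb f f x = 0 := by
  rw [pb_eq_skewForm, skewForm_self]

lemma logGrad_mul {f g : (Fin n → ℝ) → ℝ} {x : Fin n → ℝ} (hf : DifferentiableAt ℝ f x)
    (hg : DifferentiableAt ℝ g x) :
    logGrad (fun y => f y * g y) x = f x • logGrad g x + g x • logGrad f x := by
  funext i
  simp only [logGrad, pd, fderiv_fun_mul hf hg, add_apply, smul_apply, smul_eq_mul, Pi.add_apply,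
    Pi.smul_apply]
  ring

lemma logGrad_sum_apply {g : Fin n → ℝ → ℝ} {g' : Fin n → ℝ} {x : Fin n → ℝ}
    (hg : ∀ i, HasDerivAt (g i) (g' i) (x i)) :
    logGrad (fun y => ∑ i, g i (y i)) x = fun i => x i * g' i := by
  have hsum : HasFDerivAt (fun y => ∑ i, g i (y i))
      (∑ i, g' i • ContinuousLinearMap.proj (R := ℝ) (φ := fun _ : Fin n => ℝ) i) x :=
    HasFDerivAt.fun_sum fun i _ => (hg i).comp_hasFDerivAt x (hasFDerivAt_apply i x)
  funext i
  simp [logGrad, pd, hsum.fderiv, Pi.single_apply]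

lemma hasFDerivAt_prod_zpow (e : Fin n → ℤ) {x : Fin n → ℝ} (hx : ∀ i, x i ≠ 0) :
    HasFDerivAt (fun y => ∏ i, y i ^ e i)
      (∑ i, (∏ j ∈ univ.erase i, x j ^ e j) • ((e i * x i ^ (e i - 1)) •
        ContinuousLinearMap.proj (R := ℝ) (φ := fun _ : Fin n => ℝ) i)) x :=
  HasFDerivAt.finsetProd fun i _ =>
    (hasDerivAt_zpow (e i) (x i) (Or.inl (hx i))).comp_hasFDerivAt
      (f := fun y : Fin n → ℝ => y i) x (hasFDerivAt_apply i x)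

lemma logGrad_prod_zpow (e : Fin n → ℤ) {x : Fin n → ℝ} (hx : ∀ i, x i ≠ 0) :
    logGrad (fun y => ∏ i, y i ^ e i) x = (∏ i, x i ^ e i) • fun i => (e i : ℝ) := by
  funext i
  simp only [logGrad, pd, (hasFDerivAt_prod_zpow e hx).fderiv, _root_.sum_apply, smul_apply,
    ContinuousLinearMap.proj_apply, Pi.single_apply, smul_eq_mul, mul_ite, mul_one, mul_zero,
    sum_ite_eq', mem_univ, if_true, Pi.smul_apply]
  rw [← mul_prod_erase univ (fun j => x j ^ e j) (mem_univ i)]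
  have hzpow : x i * x i ^ (e i - 1) = x i ^ e i := by
    rw [← zpow_one_add₀ (hx i)]; ring_nf
  linear_combination (∏ j ∈ univ.erase i, x j ^ e j) * e i * hzpow

lemma Jfun_eq_prod_zpow (m : ℕ) :
    Jfun (n := n) m
      = fun y => ∏ i : Fin n, y i ^ (if i.val < 2 * m then (-1 : ℤ) ^ i.val else 0) := by
  funext y
  rw [Jfun, div_eq_mul_inv, ← prod_inv_distrib, prod_filter, prod_filter, ← prod_mul_distrib]
  refine prod_congr rfl fun i _ => ?_
  rcases Nat.even_or_odd i.val with h | h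
  · simp [h, h.neg_one_pow, Nat.not_odd_iff_even.mpr h]
  · simp [h, h.neg_one_pow, Nat.not_even_iff_odd.mpr h]

lemma Ifun_eq_prod_zpow (m : ℕ) :
    Ifun (n := n) m
      = fun y => ∏ i : Fin n, y i ^ (if 2 * m ≤ i.val then -(-1 : ℤ) ^ i.val else 0) := by
  funext y
  rw [Ifun, div_eq_mul_inv, ← prod_inv_distrib, prod_filter, prod_filter, ← prod_mul_distrib]
  refine prod_congr rfl fun i _ => ?_
  rcases Nat.even_or_odd i.val with h | h
  · simp [h, h.neg_one_pow, Nat.not_odd_iff_even.mpr h]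
  · simp [h, h.neg_one_pow, Nat.not_even_iff_odd.mpr h]

lemma logGrad_Jfun (m : ℕ) {x : Fin n → ℝ} (hx : ∀ i, 0 < x i) :
    logGrad (Jfun m) x = Jfun m x • altPrefix m := by
  rw [Jfun_eq_prod_zpow, logGrad_prod_zpow _ fun i => (hx i).ne']
  congr 1
  funext i
  simp only [altPrefix, truncate]
  split_ifs <;> push_cast <;> rfl

lemma differentiableAt_Ifun (m : ℕ) {x : Fin n → ℝ} (hx : ∀ i, 0 < x i) :
    DifferentiableAt ℝ (Ifun m) x := by
  rw [Ifun_eq_prod_zpow]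
  exact (hasFDerivAt_prod_zpow _ fun i => (hx i).ne').differentiableAt

lemma logGrad_Ifun {N : ℕ} (m : ℕ) {x : Fin (2 * N) → ℝ} (hx : ∀ i, 0 < x i) :
    logGrad (Ifun m) x = Ifun m x • (altPrefix m - altPrefix N) := by
  rw [Ifun_eq_prod_zpow, logGrad_prod_zpow _ fun i => (hx i).ne']
  congr 1
  funext i
  simp only [altPrefix, truncate, Pi.sub_apply, if_pos i.isLt]
  split_ifs <;> first | omega | push_cast; ring

lemma vfun_eq_sum (a : Fin n → ℝ) (r : ℕ) (x : Fin n → ℝ) :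
    vfun a r x = ∑ i, truncate a r i * x i := by
  simp only [vfun, sum_filter, truncate, ite_mul, zero_mul]

lemma logGrad_vfun (a : Fin n → ℝ) (r : ℕ) (x : Fin n → ℝ) :
    logGrad (vfun a r) x = truncate (fun i => a i * x i) r := by
  rw [funext (vfun_eq_sum a r), logGrad_sum_apply (g := fun i t => truncate a r i * t)
    fun i => by simpa using (hasDerivAt_id (x i)).const_mul (truncate a r i)]
  funext i
  simp only [truncate]; split_ifs <;> ring

lemma logGrad_Hfun (a k : Fin n → ℝ) {x : Fin n → ℝ} (hx : ∀ i, 0 < x i) :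
    logGrad (Hfun a k) x = fun i => a i * x i + k i := by
  have hH : ∀ i, HasDerivAt (fun t => a i * t + k i * Real.log t) (a i + k i * (x i)⁻¹) (x i) :=
    fun i => by
      simpa using ((hasDerivAt_id (x i)).const_mul (a i)).fun_add
        ((Real.hasDerivAt_log (hx i).ne').const_mul (k i))
  rw [show Hfun a k = fun y => ∑ i, (fun t => a i * t + k i * Real.log t) (y i) from rfl,
    logGrad_sum_apply hH]
  funext i
  field_simp [(hx i).ne']

lemma skewForm_truncate_mul_truncate (a k x : Fin n → ℝ) (m : ℕ) :
    skewForm (truncate (fun i => a i * x i) (2 * m)) (truncate k (2 * m))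
      = ∑ i, truncate (fun i => x i * Sfun a k i m) (2 * m) i := by
  rw [skewForm_apply]
  refine sum_congr rfl fun i _ => ?_
  simp only [truncate, Sfun, sum_filter]
  split_ifs with hi
  · rw [← sum_neg_distrib, ← sum_add_distrib, mul_sum, mul_sum]
    refine sum_congr rfl fun j _ => ?_
    simp only [skewSign]; split_ifs <;> first | omega | ring
  · simp

variable {N : ℕ}

lemma skewForm_sub_altPrefix {m : ℕ} (hm : m ≤ N) (B : Fin (2 * N) → ℝ) :
    skewForm (altPrefix m - altPrefix N) B = ∑ i, truncate B (2 * m) i - ∑ i, B i := by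
  rw [map_sub, LinearMap.sub_apply, skewForm_altPrefix (by omega), skewForm_altPrefix le_rfl,
    truncate_of_le _ le_rfl]

lemma skewForm_sub_altPrefix_sub_altPrefix {m m' : ℕ} (hm : m ≤ N) :
    skewForm (altPrefix m - altPrefix N) (altPrefix (n := 2 * N) m' - altPrefix N) = 0 := by
  simp only [map_sub, LinearMap.sub_apply, sub_self, skewForm_altPrefix_altPrefix (le_refl (2 * N)),
    skewForm_altPrefix_altPrefix (show 2 * m ≤ 2 * N by omega)]

def fLogGrad (u : Fin (2 * N) → ℝ) (m : ℕ) : Fin (2 * N) → ℝ :=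
  truncate u (2 * m) + (∑ i, truncate u (2 * m) i) • (altPrefix m - altPrefix N)

lemma logGrad_Ffun (a : Fin (2 * N) → ℝ) (m : ℕ) {x : Fin (2 * N) → ℝ} (hx : ∀ i, 0 < x i) :
    logGrad (Ffun a m) x = Ifun m x • fLogGrad (fun i => a i * x i) m := by
  have hv : DifferentiableAt ℝ (vfun a (2 * m)) x := by
    rw [funext (vfun_eq_sum a (2 * m))]; fun_prop
  rw [show Ffun a m = fun y => vfun a (2 * m) y * Ifun m y from rfl,
    logGrad_mul hv (differentiableAt_Ifun m hx), logGrad_Ifun m hx, logGrad_vfun, fLogGrad,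
    vfun_eq_sum]
  simp only [truncate, ite_mul, zero_mul]
  module

lemma skewForm_altPrefix_fLogGrad {p : ℕ} (hp : p ≤ N) (m : ℕ) (u : Fin (2 * N) → ℝ)
    (hu : ∀ i : Fin (2 * N), i.val < 2 * p → u i = 0) :
    skewForm (altPrefix p) (fLogGrad u m) = 0 := by
  have hzero : truncate (truncate u (2 * m)) (2 * p) = 0 :=
    truncate_eq_zero fun i hi => by simp [truncate, hu i hi]
  have hp2 : 2 * p ≤ 2 * N := by omega
  rw [fLogGrad, map_add, map_smul, map_sub, skewForm_altPrefix hp2, hzero,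
    skewForm_altPrefix_altPrefix hp2, skewForm_altPrefix_altPrefix hp2]
  simp

lemma skewForm_fLogGrad_fLogGrad {m m' : ℕ} (h : m ≤ m') (hm' : m' ≤ N) (u : Fin (2 * N) → ℝ) :
    skewForm (fLogGrad u m) (fLogGrad u m') = 0 := by
  simp only [fLogGrad, map_add, map_smul, LinearMap.add_apply, LinearMap.smul_apply, smul_eq_mul]
  rw [skewForm_truncate_left u (truncate u (2 * m')) (2 * m),
    truncate_truncate_of_ge _ (by omega : 2 * m ≤ 2 * m'), skewForm_self,
    skewForm_swap (altPrefix m' - altPrefix N), skewForm_sub_altPrefix hm',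
    skewForm_sub_altPrefix (by omega), skewForm_sub_altPrefix_sub_altPrefix (by omega),
    truncate_truncate_of_le _ (by omega : 2 * m ≤ 2 * m'),
    truncate_truncate_of_ge _ (by omega : 2 * m ≤ 2 * m')]
  ring

lemma skewForm_fLogGrad_add {m : ℕ} (hm : m ≤ N) (u k : Fin (2 * N) → ℝ) :
    skewForm (fLogGrad u m) (u + k) = skewForm (truncate u (2 * m)) (truncate k (2 * m)) := by
  simp only [fLogGrad, map_add, map_smul, LinearMap.add_apply, LinearMap.smul_apply, smul_eq_mul]
  rw [skewForm_truncate_left u u, skewForm_truncate_left u k, skewForm_self,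
    skewForm_sub_altPrefix hm, skewForm_sub_altPrefix hm]
  ring

lemma pb_Jfun_Jfun {p : ℕ} (hp : p ≤ N) (q : ℕ) {x : Fin (2 * N) → ℝ} (hx : ∀ i, 0 < x i) :
    pb (Jfun p) (Jfun q) x = 0 := by
  rw [pb_eq_skewForm, logGrad_Jfun p hx, logGrad_Jfun q hx]
  simp [skewForm_altPrefix_altPrefix (show 2 * p ≤ 2 * N by omega)]

lemma pb_Jfun_Ffun (a : Fin (2 * N) → ℝ) {p : ℕ} (hp : p ≤ N)
    (ha : ∀ i : Fin (2 * N), i.val < 2 * p → a i = 0) (m : ℕ) {x : Fin (2 * N) → ℝ}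
    (hx : ∀ i, 0 < x i) : pb (Jfun p) (Ffun a m) x = 0 := by
  rw [pb_eq_skewForm, logGrad_Jfun p hx, logGrad_Ffun a m hx]
  simp [skewForm_altPrefix_fLogGrad hp m (fun i => a i * x i) fun i hi => by simp [ha i hi]]

lemma pb_Ffun_Ffun (a : Fin (2 * N) → ℝ) {m m' : ℕ} (hm : m ≤ N) (hm' : m' ≤ N)
    {x : Fin (2 * N) → ℝ} (hx : ∀ i, 0 < x i) : pb (Ffun a m) (Ffun a m') x = 0 := by
  wlog h : m ≤ m' generalizing m m'
  · rw [pb_swap, this hm' hm (by omega), neg_zero]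
  rw [pb_eq_skewForm, logGrad_Ffun a m hx, logGrad_Ffun a m' hx]
  simp [skewForm_fLogGrad_fLogGrad h hm']

lemma pb_Jfun_Hfun (a k : Fin (2 * N) → ℝ) {p : ℕ} (hp : p ≤ N)
    (ha : ∀ i : Fin (2 * N), i.val < 2 * p → a i = 0) {x : Fin (2 * N) → ℝ}
    (hx : ∀ i, 0 < x i) : pb (Jfun p) (Hfun a k) x = Jfun p x * ∑ i, truncate k (2 * p) i := by
  rw [pb_eq_skewForm, logGrad_Jfun p hx, logGrad_Hfun a k hx, map_smul, LinearMap.smul_apply,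
    skewForm_altPrefix (by omega), smul_eq_mul]
  congr 1
  refine sum_congr rfl fun i _ => ?_
  simp only [truncate]; split_ifs with hi
  · simp [ha i hi]
  · rfl

lemma pb_Ffun_Hfun (a k : Fin (2 * N) → ℝ) {m : ℕ} (hm : m ≤ N) {x : Fin (2 * N) → ℝ}
    (hx : ∀ i, 0 < x i) :
    pb (Ffun a m) (Hfun a k) x
      = Ifun m x * ∑ i, x i * truncate (fun j => Sfun a k j m) (2 * m) i := by
  rw [pb_eq_skewForm, logGrad_Ffun a m hx, logGrad_Hfun a k hx, map_smul, LinearMap.smul_apply,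
    show (fun i => a i * x i + k i) = (fun i => a i * x i) + k from rfl,
    skewForm_fLogGrad_add hm, skewForm_truncate_mul_truncate, smul_eq_mul]
  simp only [truncate, mul_ite, mul_zero]

lemma forall_pos_sum_mul_eq_zero_iff (c : Fin n → ℝ) :
    (∀ x : Fin n → ℝ, (∀ i, 0 < x i) → ∑ i, x i * c i = 0) ↔ c = 0 := by
  refine ⟨fun h => funext fun j => ?_, fun h x _ => by simp [h]⟩
  have h1 := h 1 fun _ => one_pos
  have h2 := h (1 + Pi.single j 1) fun i => by
    simp only [Pi.add_apply, Pi.one_apply, Pi.single_apply]; split_ifs <;> norm_num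
  simp only [Pi.add_apply, add_mul, sum_add_distrib, Pi.single_apply, ite_mul, one_mul, zero_mul,
    sum_ite_eq', mem_univ, if_true, Pi.one_apply] at h1 h2
  simp only [Pi.zero_apply]
  linarith

lemma forall_pb_Jfun_Hfun_eq_zero_iff (a k : Fin (2 * N) → ℝ) {p : ℕ} (hp : p ≤ N)
    (ha : ∀ i : Fin (2 * N), i.val < 2 * p → a i = 0) :
    (∀ x : Fin (2 * N) → ℝ, (∀ i, 0 < x i) → pb (Jfun p) (Hfun a k) x = 0)
      ↔ ∑ i, truncate k (2 * p) i = 0 := by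
  refine ⟨fun h => ?_, fun h x hx => by rw [pb_Jfun_Hfun a k hp ha hx, h, mul_zero]⟩
  have h1 := h (fun _ => 1) fun _ => one_pos
  rw [pb_Jfun_Hfun a k hp ha fun _ => one_pos] at h1
  exact (mul_eq_zero.1 h1).resolve_left
    (div_pos (prod_pos fun _ _ => one_pos) (prod_pos fun _ _ => one_pos)).ne'

lemma forall_pb_Ffun_Hfun_eq_zero_iff (a k : Fin (2 * N) → ℝ) {m : ℕ} (hm : m ≤ N) {ℓ : ℕ}
    (ha : ∀ j : Fin (2 * N), j.val < ℓ → a j = 0) :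
    (∀ x : Fin (2 * N) → ℝ, (∀ i, 0 < x i) → pb (Ffun a m) (Hfun a k) x = 0)
      ↔ ∀ j : Fin (2 * N), ℓ ≤ j.val → j.val < 2 * m → Sfun a k j m = 0 := by
  have hI : ∀ x : Fin (2 * N) → ℝ, (∀ i, 0 < x i) → Ifun m x ≠ 0 := fun x hx =>
    (div_pos (prod_pos fun i _ => hx i) (prod_pos fun i _ => hx i)).ne'
  calc (∀ x : Fin (2 * N) → ℝ, (∀ i, 0 < x i) → pb (Ffun a m) (Hfun a k) x = 0)
      ↔ ∀ x : Fin (2 * N) → ℝ, (∀ i, 0 < x i) →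
          ∑ i, x i * truncate (fun j => Sfun a k j m) (2 * m) i = 0 := by
        refine forall_congr' fun x => forall_congr' fun hx => ?_
        rw [pb_Ffun_Hfun a k hm hx, mul_eq_zero, or_iff_right (hI x hx)]
    _ ↔ truncate (fun j => Sfun a k j m) (2 * m) = 0 := forall_pos_sum_mul_eq_zero_iff _
    _ ↔ ∀ j : Fin (2 * N), ℓ ≤ j.val → j.val < 2 * m → Sfun a k j m = 0 := by
        simp only [funext_iff, truncate, Pi.zero_apply, ite_eq_right_iff]
        refine forall_congr' fun j => ⟨fun h _ => h, fun h hj => ?_⟩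
        by_cases hjℓ : ℓ ≤ j.val
        · exact h hjℓ hj
        · simp [Sfun, ha j (by omega)]

lemma sum_truncate_two_mul_add_two (B : Fin n → ℝ) {p : ℕ} (hp : 2 * p + 2 ≤ n) :
    ∑ i, truncate B (2 * (p + 1)) i
      = ∑ i, truncate B (2 * p) i + B ⟨2 * p, by omega⟩ + B ⟨2 * p + 1, by omega⟩ := by
  have h : ∀ i, truncate B (2 * (p + 1)) i = truncate B (2 * p) i
      + (if i = ⟨2 * p, by omega⟩ then B i else 0)
      + (if i = ⟨2 * p + 1, by omega⟩ then B i else 0) := fun i => by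
    simp only [truncate, Fin.ext_iff]; split_ifs <;> first | omega | ring
  rw [sum_congr rfl fun i _ => h i, sum_add_distrib, sum_add_distrib, sum_ite_eq', sum_ite_eq']
  simp

lemma forall_sum_truncate_eq_zero_iff (B : Fin n → ℝ) {L : ℕ} (hL : 2 * L ≤ n) :
    (∀ p ≤ L, ∑ i, truncate B (2 * p) i = 0)
      ↔ ∀ i (hi : i < L), B ⟨2 * i + 1, by omega⟩ = -B ⟨2 * i, by omega⟩ := by
  constructor
  · intro h i hi
    have := sum_truncate_two_mul_add_two B (p := i) (by omega)
    rw [h (i + 1) hi, h i hi.le] at this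
    linarith
  · intro h p hp
    induction p with
    | zero => simp [truncate]
    | succ p ih =>
      rw [sum_truncate_two_mul_add_two B (by omega), ih (by omega), h p (by omega)]
      ring

lemma forall_pb_eq_zero_iff_forall_pb_right {ι : Type*} (G : ι → (Fin n → ℝ) → ℝ) (i₀ : ι)
    (hG : ∀ p q, p ≠ i₀ → q ≠ i₀ → ∀ x : Fin n → ℝ, (∀ i, 0 < x i) → pb (G p) (G q) x = 0) :
    (∀ p q, ∀ x : Fin n → ℝ, (∀ i, 0 < x i) → pb (G p) (G q) x = 0)
      ↔ ∀ p, ∀ x : Fin n → ℝ, (∀ i, 0 < x i) → pb (G p) (G i₀) x = 0 := by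
  refine ⟨fun h p => h p i₀, fun h p q x hx => ?_⟩
  by_cases hp : p = i₀ <;> by_cases hq : q = i₀
  · subst hp hq; exact pb_self _ _
  · subst hp; rw [pb_swap, h q x hx, neg_zero]
  · subst hq; exact h p x hx
  · exact hG p q hp hq x hx

lemma pb_eq_zero_of_Jfun_or_Ffun (a : Fin (2 * N) → ℝ) {L : ℕ} (hL : L ≤ N)
    (ha : ∀ i : Fin (2 * N), i.val < 2 * L → a i = 0) {f g : (Fin (2 * N) → ℝ) → ℝ}
    (hf : (∃ r ≤ L, f = Jfun r) ∨ ∃ m ≤ N, f = Ffun a m)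
    (hg : (∃ r ≤ L, g = Jfun r) ∨ ∃ m ≤ N, g = Ffun a m)
    {x : Fin (2 * N) → ℝ} (hx : ∀ i, 0 < x i) : pb f g x = 0 := by
  have haJ : ∀ r ≤ L, ∀ i : Fin (2 * N), i.val < 2 * r → a i = 0 :=
    fun r hr i hi => ha i (by omega)
  rcases hf with ⟨r, hr, rfl⟩ | ⟨m, hm, rfl⟩ <;> rcases hg with ⟨s, hs, rfl⟩ | ⟨m', hm', rfl⟩
  · exact pb_Jfun_Jfun (by omega) s hx
  · exact pb_Jfun_Ffun a (by omega) (haJ r hr) m' hx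
  · rw [pb_swap, pb_Jfun_Ffun a (by omega) (haJ s hs) m hx, neg_zero]
  · exact pb_Ffun_Ffun a hm hm' hx

end LogCanonical

open LogCanonical in
/-- Theorem 4.2 (main theorem) of the paper: for even `n = 2N`, `a ≠ 0`, `ℓ` the smallest index
with `a_{ℓ+1} ≠ 0` and `λ = ⌊ℓ/2⌋`, the `N` functions `J_1,…,J_λ, F_{λ+1},…,F_{N−1}, H` are
pairwise in involution iff `k_{2i} = −k_{2i−1}` for `i = 1,…,λ` and `S_{jm} = 0` for
`m = λ+1,…,N−1`, `j = ℓ+1,…,2m`. -/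
theorem stmt_10 (N : ℕ) (a k : Fin (2*N) → ℝ)
    (ℓ : ℕ) (hℓ : ℓ < 2*N)
    (hℓ0 : ∀ j : Fin (2*N), j.val < ℓ → a j = 0)
    (G : Fin N → (Fin (2*N) → ℝ) → ℝ)
    (hG : ∀ p : Fin N, G p =
      if p.val < ℓ/2 then Jfun (p.val+1)
      else if p.val < N - 1 then Ffun a (p.val+1)
      else Hfun a k) :
    (∀ p q : Fin N, ∀ x : Fin (2*N) → ℝ, (∀ i, 0 < x i) → pb (G p) (G q) x = 0) ↔
    ((∀ i : ℕ, (hi : i < ℓ/2) → k ⟨2*i+1, by omega⟩ = -k ⟨2*i, by omega⟩) ∧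
     (∀ m : ℕ, ℓ/2 + 1 ≤ m → m + 1 ≤ N →
       ∀ j : Fin (2*N), ℓ ≤ j.val → j.val < 2*m → Sfun a k j m = 0)) := by
  let last : Fin N := ⟨N - 1, by omega⟩
  have hJ : ∀ p (hp : p < ℓ / 2), G ⟨p, by omega⟩ = Jfun (p + 1) := fun p hp => by
    rw [hG]; exact if_pos hp
  have hF : ∀ p (hp : ℓ / 2 ≤ p) (hpN : p < N - 1), G ⟨p, by omega⟩ = Ffun a (p + 1) :=
    fun p hp hpN => by rw [hG]; exact (if_neg (by simp; omega)).trans (if_pos hpN)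
  have hH : G last = Hfun a k := by
    rw [hG]; exact (if_neg (by simp [last]; omega)).trans (if_neg (by simp [last]))
  have hJH : ∀ p ≤ ℓ / 2, _ := fun p hp =>
    forall_pb_Jfun_Hfun_eq_zero_iff a k (p := p) (by omega) fun i hi => hℓ0 i (by omega)
  have hFH : ∀ m ≤ N, _ := fun m hm => forall_pb_Ffun_Hfun_eq_zero_iff a k (m := m) hm hℓ0
  have hmem : ∀ p, p ≠ last → (∃ r ≤ ℓ / 2, G p = Jfun r) ∨ ∃ m ≤ N, G p = Ffun a m := by
    rintro ⟨p, hp⟩ hpl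
    have : p < N - 1 := by simp [last, Fin.ext_iff] at hpl; omega
    by_cases h : p < ℓ / 2
    exacts [.inl ⟨p + 1, by omega, hJ p h⟩, .inr ⟨p + 1, by omega, hF p (by omega) this⟩]
  rw [forall_pb_eq_zero_iff_forall_pb_right G last fun p q hp hq x hx =>
      pb_eq_zero_of_Jfun_or_Ffun a (by omega) (fun i hi => hℓ0 i (by omega)) (hmem p hp)
        (hmem q hq) hx, hH, ← forall_sum_truncate_eq_zero_iff k (L := ℓ / 2) (by omega)]
  constructor
  · intro h
    refine ⟨fun p hp => ?_, fun m hm1 hm2 => ?_⟩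
    · cases p with
      | zero => simp [truncate]
      | succ p => exact (hJH (p + 1) hp).1 (hJ p (by omega) ▸ h ⟨p, by omega⟩)
    · obtain ⟨m, rfl⟩ : ∃ p, m = p + 1 := ⟨m - 1, by omega⟩
      exact (hFH (m + 1) (by omega)).1 (hF m (by omega) (by omega) ▸ h ⟨m, by omega⟩)
  · rintro ⟨hk, hS⟩ p
    rw [hG]
    split_ifs with h1 h2
    · exact (hJH _ (by omega)).2 (hk _ (by omega))
    · exact (hFH _ (by omega)).2 (hS _ (by omega) (by omega))
    · exact fun x _ => pb_self _ x
end

section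
/- Let n = 4, a = (1,1,1,1), and k = (0,0,k_3,k_4) with k_3, k_4 ∈ ℝ. Then the function G(x) = (x_1 + x_2) x_4 / x_3 is a first integral of the Lotka–Volterra system: {G, H}(x) = 0 for all x ∈ (0,∞)^4, where H(x) = Σ_{i=1}^4 x_i + k_3 log x_3 + k_4 log x_4; equivalently, G is constant along every solution of the system in (0,∞)^4. -/
/-! With `a = 1` the Lotka–Volterra field is the Hamiltonian vector field of
`H = Σ (x_i + k_i log x_i)` for the log-canonical bracket: `x_j ∂_j H = x_j + k_j`, so
`ẋ_i = x_i Σ_j P_ij x_j ∂_j H` and `d/dt f(x(t)) = {f, H}(x(t))` for every differentiable `f`.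
Both claims thus reduce to `{G, H} = 0`, i.e. to the vanishing of the derivative of `G` along the
field, which is the cancellation `(ẋ₁ + ẋ₂)/(x₁ + x₂) + ẋ₄/x₄ - ẋ₃/x₃ = 0` of logarithmic derivatives. -/

theorem Convex.eq_of_forall_hasDerivWithinAt_zero {E : Type*} [NormedAddCommGroup E]
    [NormedSpace ℝ E] {f : ℝ → E} {s : Set ℝ} (hs : Convex ℝ s)
    (hf : ∀ t ∈ s, HasDerivWithinAt f 0 s t) {a b : ℝ} (ha : a ∈ s) (hb : b ∈ s) :
    f a = f b := by
  have h := hs.norm_image_sub_le_of_norm_hasDerivWithin_le hf (C := 0) (by simp) hb ha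
  rwa [zero_mul, norm_le_zero_iff, sub_eq_zero] at h

section LogCanonical

variable {n : ℕ}

theorem sum_pd_mul_eq_fderiv (f : (Fin n → ℝ) → ℝ) (x v : Fin n → ℝ) :
    ∑ i, pd f x i * v i = fderiv ℝ f x v := by
  conv_rhs => rw [pi_eq_sum_univ' v, map_sum]
  simp [pd, mul_comm]

theorem pb_eq_sum_Pmat (f g : (Fin n → ℝ) → ℝ) (x : Fin n → ℝ) :
    pb f g x = ∑ i, ∑ j, Pmat n i j * (x i * pd f x i) * (x j * pd g x j) := by
  set c : Fin n → Fin n → ℝ := fun i j => x i * pd f x i * (x j * pd g x j)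
  have hpb : ∀ i j, (if i < j then x i * x j * (pd f x i * pd g x j - pd f x j * pd g x i)
      else 0) = (if i < j then c i j else 0) - (if i < j then c j i else 0) := by
    intro i j; simp only [c]; split_ifs <;> ring
  have hP : ∀ i j, Pmat n i j * (x i * pd f x i) * (x j * pd g x j) =
      (if i < j then c i j else 0) - (if j < i then c i j else 0) := by
    intro i j
    simp only [Pmat, c]
    split_ifs with h₁ h₂ h₂
    exacts [(lt_asymm h₁ h₂).elim, by ring, by ring, by ring]
  simp only [pb, hpb, hP, Finset.sum_sub_distrib]
  rw [Finset.sum_comm (f := fun i j => if i < j then c j i else 0)]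

def lvField (k x : Fin n → ℝ) : Fin n → ℝ :=
  fun i => x i * ∑ j, Pmat n i j * (x j + k j)

noncomputable def lvHamiltonian (k y : Fin n → ℝ) : ℝ :=
  ∑ i, (y i + k i * Real.log (y i))

theorem hasFDerivAt_lvHamiltonian (k : Fin n → ℝ) {x : Fin n → ℝ} (hx : ∀ i, x i ≠ 0) :
    HasFDerivAt (lvHamiltonian k)
      (∑ i, (1 + k i / x i) • ContinuousLinearMap.proj (R := ℝ) (φ := fun _ : Fin n => ℝ) i)
      x := by
  refine HasFDerivAt.fun_sum fun i _ => ?_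
  have hcoord : HasFDerivAt (fun y : Fin n → ℝ => y i) (ContinuousLinearMap.proj i) x :=
    hasFDerivAt_apply (𝕜 := ℝ) i x
  convert hcoord.fun_add ((hcoord.log (hx i)).const_mul (k i)) using 1
  rw [add_smul, one_smul, smul_smul, div_eq_mul_inv]

theorem mul_pd_lvHamiltonian (k : Fin n → ℝ) {x : Fin n → ℝ} (hx : ∀ i, x i ≠ 0) (j : Fin n) :
    x j * pd (lvHamiltonian k) x j = x j + k j := by
  rw [pd, (hasFDerivAt_lvHamiltonian k hx).fderiv]
  simp only [sum_apply, smul_apply, ContinuousLinearMap.proj_apply, Pi.single_apply, smul_eq_mul,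
    mul_ite, mul_one, mul_zero, Finset.sum_ite_eq', Finset.mem_univ, if_true]
  field_simp [hx j]

theorem pb_lvHamiltonian (f : (Fin n → ℝ) → ℝ) (k : Fin n → ℝ) {x : Fin n → ℝ}
    (hx : ∀ i, x i ≠ 0) : pb f (lvHamiltonian k) x = fderiv ℝ f x (lvField k x) := by
  simp only [pb_eq_sum_Pmat, mul_pd_lvHamiltonian k hx, ← sum_pd_mul_eq_fderiv, lvField,
    Finset.mul_sum]
  refine Finset.sum_congr rfl fun i _ => Finset.sum_congr rfl fun j _ => ?_
  ring

theorem hasDerivAt_comp_lvSolution {f : (Fin n → ℝ) → ℝ} {k : Fin n → ℝ} {x : ℝ → Fin n → ℝ}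
    {t : ℝ} (hx : ∀ i, x t i ≠ 0) (hf : DifferentiableAt ℝ f (x t))
    (hsol : ∀ i, HasDerivAt (fun s => x s i) (lvField k (x t) i) t) :
    HasDerivAt (fun s => f (x s)) (pb f (lvHamiltonian k) (x t)) t := by
  rw [pb_lvHamiltonian f k hx]
  exact hf.hasFDerivAt.comp_hasDerivAt t (hasDerivAt_pi.mpr hsol)

end LogCanonical

theorem fderiv_ratio_apply_lvField_eq_zero (k₃ k₄ : ℝ) {x : Fin 4 → ℝ} (hx : x 2 ≠ 0) :
    fderiv ℝ (fun y : Fin 4 → ℝ => (y 0 + y 1) * y 3 / y 2) x (lvField ![0, 0, k₃, k₄] x) = 0 := by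
  have hcoord (i : Fin 4) : HasFDerivAt (fun y : Fin 4 → ℝ => y i) (ContinuousLinearMap.proj i) x :=
    hasFDerivAt_apply (𝕜 := ℝ) i x
  have hG := (((hcoord 0).add (hcoord 1)).mul (hcoord 3)).mul
    ((hasDerivAt_inv hx).comp_hasFDerivAt x (hcoord 2))
  simp only [Pi.add_def, Pi.mul_def, Function.comp_def, ← div_eq_mul_inv] at hG
  rw [hG.fderiv]
  simp only [add_apply, smul_apply, ContinuousLinearMap.proj_apply, smul_eq_mul, lvField, Pmat,
    Fin.sum_univ_four, Fin.reduceLT, lt_self_iff_false, if_true, if_false, Matrix.cons_val_zero,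
    Matrix.cons_val_one, Matrix.cons_val]
  field_simp
  ring

/-- For `n = 4`, `a = (1,1,1,1)` and `k = (0,0,k₃,k₄)`: the function
`G(x) = (x_1 + x_2) x_4 / x_3` is a first integral: `{G, H} = 0` on the positive orthant
(with `H(x) = Σ_i x_i + k₃ log x_3 + k₄ log x_4`), and `G` is constant along every solution
of the Lotka–Volterra system with values in the positive orthant. -/
theorem stmt_18 (k₃ k₄ : ℝ) (k : Fin 4 → ℝ) (hk : k = ![0, 0, k₃, k₄])
    (G : (Fin 4 → ℝ) → ℝ) (hG : G = fun y => (y 0 + y 1) * y 3 / y 2)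
    (H : (Fin 4 → ℝ) → ℝ)
    (hH : H = fun y => (∑ i, y i) + k₃ * Real.log (y 2) + k₄ * Real.log (y 3)) :
    (∀ x : Fin 4 → ℝ, (∀ i, 0 < x i) → pb G H x = 0) ∧
    (∀ (I : Set ℝ), Convex ℝ I → ∀ x : ℝ → Fin 4 → ℝ,
      (∀ t ∈ I, ∀ i, 0 < x t i) →
      (∀ t ∈ I, ∀ i : Fin 4, HasDerivAt (fun s => x s i)
        (x t i * ∑ j, Pmat 4 i j * (x t j + k j)) t) →
      ∀ s ∈ I, ∀ t ∈ I, G (x s) = G (x t)) := by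
  subst hk hG
  have hH' : H = lvHamiltonian ![0, 0, k₃, k₄] := by
    rw [hH]
    funext y
    simp only [lvHamiltonian, Fin.sum_univ_four, Matrix.cons_val_zero, Matrix.cons_val_one,
      Matrix.cons_val, zero_mul, add_zero]
    ring
  subst hH'
  have hpb (x : Fin 4 → ℝ) (hx : ∀ i, 0 < x i) :
      pb (fun y => (y 0 + y 1) * y 3 / y 2) (lvHamiltonian ![0, 0, k₃, k₄]) x = 0 := by
    rw [pb_lvHamiltonian _ _ fun i => (hx i).ne']
    exact fderiv_ratio_apply_lvField_eq_zero k₃ k₄ (hx 2).ne'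
  refine ⟨hpb, fun I hI x hpos hsol s hs t ht => ?_⟩
  refine hI.eq_of_forall_hasDerivWithinAt_zero
    (f := fun u => (x u 0 + x u 1) * x u 3 / x u 2) (fun u hu => ?_) hs ht
  have hdiff : DifferentiableAt ℝ (fun y : Fin 4 → ℝ => (y 0 + y 1) * y 3 / y 2) (x u) := by
    have := (hpos u hu 2).ne'
    fun_prop (disch := assumption)
  rw [← hpb (x u) (hpos u hu)]
  exact (hasDerivAt_comp_lvSolution (fun i => (hpos u hu i).ne') hdiff (hsol u hu)).hasDerivWithinAt
end
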